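/- arXiv:2408.14031 — 3 statements merged into one kernel-verified Lean document; each statement's English description precedes it below -/
import Mathlib

section
/- Preservation for configuration reduction: if M | ℋ →γ M' | ℋ', C ⊢ M : T | e, and (C , C'') ⊢ ℋ, then there exists a run-time context C' such that (dom C' \ dom C) ∩ dom C'' = ∅, C' ⊢ M' : T | e, and (C' , C'') ⊢ ℋ'. -/
set_option autoImplicit false
set_option linter.unusedVariables false

namespace LawOrder

/-! ## Graph representations -/

structure Graph (B : Type) where
  n : ℕ
  label : ℕ → B
  edge : ℕ → ℕ → Prop
  edge_lt : ∀ i j, edge i j → i < n ∧ j < n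

namespace Graph

variable {B : Type}

/-- The edge relation is acyclic. -/
def Acyclic (G : Graph B) : Prop := ∀ i, ¬ Relation.TransGen G.edge i i

/-- The empty graph representation. -/
def zero (B : Type) [Inhabited B] : Graph B :=
  ⟨0, fun _ => default, fun _ _ => False, fun _ _ h => h.elim⟩

/-- Union of two graph representations: disjoint union, second part shifted. -/
def union (G₁ G₂ : Graph B) : Graph B where
  n := G₁.n + G₂.n
  label := fun i => if i < G₁.n then G₁.label i else G₂.label (i - G₁.n)
  edge := fun i j =>
    G₁.edge i j ∨ (G₁.n ≤ i ∧ G₁.n ≤ j ∧ G₂.edge (i - G₁.n) (j - G₁.n))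
  edge_lt := by
    intro i j h
    rcases h with h | ⟨hi, hj, h⟩
    · have := G₁.edge_lt i j h; omega
    · have := G₂.edge_lt _ _ h; omega

/-- Join of two graph representations: union plus all edges from the first
    part to the second part. -/
def join (G₁ G₂ : Graph B) : Graph B where
  n := G₁.n + G₂.n
  label := fun i => if i < G₁.n then G₁.label i else G₂.label (i - G₁.n)
  edge := fun i j =>
    G₁.edge i j ∨ (G₁.n ≤ i ∧ G₁.n ≤ j ∧ G₂.edge (i - G₁.n) (j - G₁.n)) ∨
      (i < G₁.n ∧ G₁.n ≤ j ∧ j < G₁.n + G₂.n)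
  edge_lt := by
    intro i j h
    rcases h with h | ⟨hi, hj, h⟩ | ⟨hi, hj₁, hj₂⟩
    · have := G₁.edge_lt i j h; omega
    · have := G₂.edge_lt _ _ h; omega
    · omega

/-- Isomorphism of graph representations. -/
def Iso (G₁ G₂ : Graph B) : Prop :=
  G₁.n = G₂.n ∧ ∃ f : Fin G₁.n → Fin G₁.n, Function.Bijective f ∧
    (∀ i j : Fin G₁.n, G₁.edge (f i).val (f j).val ↔ G₂.edge i.val j.val) ∧
    (∀ i : Fin G₁.n, G₁.label (f i).val = G₂.label i.val)

/-- `G₁` is a spanning graph representation of `G₂`: same vertices and labels,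
    and the edges of `G₁` are contained in those of `G₂`. -/
def Spanning (G₁ G₂ : Graph B) : Prop :=
  G₁.n = G₂.n ∧ (∀ i, i < G₁.n → G₁.label i = G₂.label i) ∧
    ∀ i j, G₁.edge i j → G₂.edge i j

/-- `f` is a topological ordering of `G`: `f` enumerates the vertices so that
    edges always point forward. -/
def IsTopOrder (G : Graph B) (f : Equiv.Perm (Fin G.n)) : Prop :=
  ∀ i j : Fin G.n, G.edge i.val j.val → f.symm i < f.symm j

/-- `G` has exactly one topological ordering. -/
def Traceable (G : Graph B) : Prop :=
  ∃! f : Equiv.Perm (Fin G.n), G.IsTopOrder f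

/-- The identity enumeration is a topological ordering: all edges increase. -/
def TopOrdered (G : Graph B) : Prop := ∀ i j, G.edge i j → i < j

/-- `k` is a union cut of `G`: no edge crosses from below `k` to `k` or above. -/
def UnionCut (G : Graph B) (k : ℕ) : Prop :=
  0 < k ∧ k < G.n ∧ ∀ i j, i < k → k ≤ j → ¬ G.edge i j

/-- `k` is a join cut of `G`: every pair crossing from below `k` to `k` or
    above (within range) is an edge. -/
def JoinCut (G : Graph B) (k : ℕ) : Prop :=
  0 < k ∧ k < G.n ∧ ∀ i j, i < k → k ≤ j → j < G.n → G.edge i j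

/-- Lower part of the index cut at `k`. -/
def cutLo (G : Graph B) (k : ℕ) : Graph B where
  n := k
  label := G.label
  edge := fun i j => G.edge i j ∧ i < k ∧ j < k
  edge_lt := fun i j h => ⟨h.2.1, h.2.2⟩

/-- Upper part of the index cut at `k` (re-indexed from 0). -/
def cutHi (G : Graph B) (k : ℕ) : Graph B where
  n := G.n - k
  label := fun i => G.label (i + k)
  edge := fun i j => G.edge (i + k) (j + k)
  edge_lt := by
    intro i j h
    have := G.edge_lt _ _ h
    omega

/-- Weak connectedness: any two vertices are joined by an undirected path. -/
def WeaklyConnected (G : Graph B) : Prop :=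
  ∀ i j, i < G.n → j < G.n →
    Relation.ReflTransGen (fun a b => G.edge a b ∨ G.edge b a) i j

/-- Union of a nonempty sequence of graph representations. -/
def unionList (G : Graph B) (L : List (Graph B)) : Graph B :=
  L.foldl union G

end Graph

/-! ## Contexts built from bindings with ordered and unordered composition -/

inductive GCtx (B : Type) where
  | empty : GCtx B
  | bind : B → GCtx B
  | comma : GCtx B → GCtx B → GCtx B
  | par : GCtx B → GCtx B → GCtx B

/-- Context patterns: contexts with a single hole. -/
inductive GPat (B : Type) where
  | hole : GPat B
  | commaL : GPat B → GCtx B → GPat B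
  | commaR : GCtx B → GPat B → GPat B
  | parL : GPat B → GCtx B → GPat B
  | parR : GCtx B → GPat B → GPat B

def GPat.fill {B : Type} : GPat B → GCtx B → GCtx B
  | .hole, Γ => Γ
  | .commaL G Δ, Γ => .comma (G.fill Γ) Δ
  | .commaR Δ G, Γ => .comma Δ (G.fill Γ)
  | .parL G Δ, Γ => .par (G.fill Γ) Δ
  | .parR Δ G, Γ => .par Δ (G.fill Γ)

def GCtx.toList {B : Type} : GCtx B → List B
  | .empty => []
  | .bind b => [b]
  | .comma Γ₁ Γ₂ => Γ₁.toList ++ Γ₂.toList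
  | .par Γ₁ Γ₂ => Γ₁.toList ++ Γ₂.toList

/-- Graph part of the interpretation of a context: unrestricted bindings
    contribute no vertex, ordered bindings one vertex; `comma` is join,
    `par` is union. -/
def GCtx.interpG {B : Type} [Inhabited B] (unr : B → Bool) : GCtx B → Graph B
  | .empty => Graph.zero B
  | .bind b =>
      if unr b then Graph.zero B
      else ⟨1, fun _ => b, fun _ _ => False, fun _ _ h => h.elim⟩
  | .comma Γ₁ Γ₂ => (interpG unr Γ₁).join (interpG unr Γ₂)
  | .par Γ₁ Γ₂ => (interpG unr Γ₁).union (interpG unr Γ₂)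

/-- Set part of the interpretation of a context: the set of its
    unrestricted bindings. -/
def GCtx.unrSet {B : Type} (unr : B → Bool) : GCtx B → Set B
  | .empty => ∅
  | .bind b => if unr b then {b} else ∅
  | .comma Γ₁ Γ₂ => unrSet unr Γ₁ ∪ unrSet unr Γ₂
  | .par Γ₁ Γ₂ => unrSet unr Γ₁ ∪ unrSet unr Γ₂

/-! ## Ordered partial monoids -/

structure OPM (α : Type) where
  mul : α → α → Option α
  eps : α
  le : α → α → Prop
  le_refl : ∀ a, le a a
  le_trans : ∀ a b c, le a b → le b c → le a c
  eps_mul : ∀ a, mul eps a = some a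
  mul_eps : ∀ a, mul a eps = some a
  mul_assoc : ∀ a b c,
    (mul a b).bind (fun x => mul x c) = (mul b c).bind (fun x => mul a x)
  mul_mono : ∀ a a' b b' c', le a a' → le b b' → mul a' b' = some c' →
    ∃ c, mul a b = some c ∧ le c c'

/-- `P.mulLe a b c` means `a ⊙ b` is defined and `a ⊙ b ≤ c`. -/
def OPM.mulLe {α : Type} (P : OPM α) (a b c : α) : Prop :=
  ∃ r, P.mul a b = some r ∧ P.le r c

/-! ## Types and effects (effects are booleans: `false` = 0, `true` = 1) -/

inductive Ty (α : Type) where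
  | unit : Ty α
  | res : α → Ty α
  | arrow : Ty α → Bool → Ty α → Ty α
  | uarrow : Ty α → Bool → Ty α → Ty α
  | rarrow : Ty α → Bool → Ty α → Ty α
  | larrow : Ty α → Bool → Ty α → Ty α
  | uprod : Ty α → Ty α → Ty α
  | oprod : Ty α → Ty α → Ty α

def Ty.unrB {α : Type} : Ty α → Bool
  | .unit => true
  | .res _ => false
  | .arrow _ _ _ => true
  | .uarrow _ _ _ => false
  | .rarrow _ _ _ => false
  | .larrow _ _ _ => false
  | .uprod S T => S.unrB && T.unrB
  | .oprod S T => S.unrB && T.unrB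

/-- Unrestricted types. -/
def Ty.Unr {α : Type} (T : Ty α) : Prop := T.unrB = true

/-- Ordered types. -/
def Ty.Ord {α : Type} (T : Ty α) : Prop := T.unrB = false

/-! ## Bindings and typing contexts -/

inductive Binding (α : Type) where
  | var : ℕ → Ty α → Binding α
  | loc : ℕ → α → Binding α

instance {α : Type} : Inhabited (Binding α) := ⟨Binding.var 0 Ty.unit⟩

def Binding.unrB {α : Type} : Binding α → Bool
  | .var _ T => T.unrB
  | .loc _ _ => false

abbrev Ctx (α : Type) := GCtx (Binding α)
abbrev CtxPat (α : Type) := GPat (Binding α)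

/-- Graph part of the interpretation of a typing context. -/
def interpC {α : Type} (Γ : Ctx α) : Graph (Binding α) :=
  GCtx.interpG Binding.unrB Γ

/-- Set part of the interpretation of a typing context. -/
def unrSetC {α : Type} (Γ : Ctx α) : Set (Binding α) :=
  GCtx.unrSet Binding.unrB Γ

/-- Subcontext relation `Γ₁ ≲ Γ₂`: up to isomorphism on both sides, the graph
    of `Γ₁` is a spanning subgraph of the graph of `Γ₂`, and the unrestricted
    set of `Γ₂` is contained in that of `Γ₁`. -/
def SubC {α : Type} (Γ₁ Γ₂ : Ctx α) : Prop :=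
  (∃ G₁ G₂ : Graph (Binding α),
      Graph.Iso (interpC Γ₁) G₁ ∧ Graph.Spanning G₁ G₂ ∧ Graph.Iso G₂ (interpC Γ₂)) ∧
    unrSetC Γ₂ ⊆ unrSetC Γ₁

def vdom {α : Type} (Γ : Ctx α) : Set ℕ :=
  {x | ∃ T, Binding.var x T ∈ GCtx.toList Γ}

def ldom {α : Type} (Γ : Ctx α) : Set ℕ :=
  {l | ∃ m, Binding.loc l m ∈ GCtx.toList Γ}

/-- All bindings of the context are unrestricted. -/
def isUnrCtx {α : Type} (Γ : Ctx α) : Prop :=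
  ∀ b ∈ GCtx.toList Γ, Binding.unrB b = true

/-- Run-time contexts contain only location bindings. -/
def isRuntime {α : Type} (Γ : Ctx α) : Prop :=
  ∀ b ∈ GCtx.toList Γ, ∃ l m, b = Binding.loc l m

/-! ## Expressions -/

inductive Const (α : Type) where
  | unit : Const α
  | new : α → Const α
  | op : α → Const α
  | split : α → α → Const α
  | drop : Const α

inductive Expr (α : Type) where
  | const : Const α → Expr α
  | loc : ℕ → Expr α
  | var : ℕ → Expr α
  | abs : ℕ → Expr α → Expr α
  | uabs : ℕ → Expr α → Expr α
  | rabs : ℕ → Expr α → Expr α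
  | labs : ℕ → Expr α → Expr α
  | app : Expr α → Expr α → Expr α
  | uapp : Expr α → Expr α → Expr α
  | rapp : Expr α → Expr α → Expr α
  | lapp : Expr α → Expr α → Expr α
  | upair : Expr α → Expr α → Expr α
  | opair : Expr α → Expr α → Expr α
  | ulet : ℕ → ℕ → Expr α → Expr α → Expr α
  | olet : ℕ → ℕ → Expr α → Expr α → Expr α

inductive IsValue {α : Type} : Expr α → Prop where
  | const : ∀ c : Const α, IsValue (Expr.const c)
  | loc : ∀ l : ℕ, IsValue (Expr.loc l)
  | abs : ∀ (x : ℕ) (M : Expr α), IsValue (Expr.abs x M)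
  | uabs : ∀ (x : ℕ) (M : Expr α), IsValue (Expr.uabs x M)
  | rabs : ∀ (x : ℕ) (M : Expr α), IsValue (Expr.rabs x M)
  | labs : ∀ (x : ℕ) (M : Expr α), IsValue (Expr.labs x M)
  | upair : ∀ V₁ V₂ : Expr α, IsValue V₁ → IsValue V₂ → IsValue (Expr.upair V₁ V₂)
  | opair : ∀ V₁ V₂ : Expr α, IsValue V₁ → IsValue V₂ → IsValue (Expr.opair V₁ V₂)

/-- Substitution `M[V/x]` (values substituted at run time are closed, so
    no capture can occur). -/
def subst {α : Type} : Expr α → Expr α → ℕ → Expr α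
  | Expr.const c, _, _ => Expr.const c
  | Expr.loc l, _, _ => Expr.loc l
  | Expr.var y, V, x => if y = x then V else Expr.var y
  | Expr.abs y N, V, x => Expr.abs y (if y = x then N else subst N V x)
  | Expr.uabs y N, V, x => Expr.uabs y (if y = x then N else subst N V x)
  | Expr.rabs y N, V, x => Expr.rabs y (if y = x then N else subst N V x)
  | Expr.labs y N, V, x => Expr.labs y (if y = x then N else subst N V x)
  | Expr.app M N, V, x => Expr.app (subst M V x) (subst N V x)
  | Expr.uapp M N, V, x => Expr.uapp (subst M V x) (subst N V x)
  | Expr.rapp M N, V, x => Expr.rapp (subst M V x) (subst N V x)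
  | Expr.lapp M N, V, x => Expr.lapp (subst M V x) (subst N V x)
  | Expr.upair M N, V, x => Expr.upair (subst M V x) (subst N V x)
  | Expr.opair M N, V, x => Expr.opair (subst M V x) (subst N V x)
  | Expr.ulet y z M N, V, x =>
      Expr.ulet y z (subst M V x) (if y = x ∨ z = x then N else subst N V x)
  | Expr.olet y z M N, V, x =>
      Expr.olet y z (subst M V x) (if y = x ∨ z = x then N else subst N V x)

/-! ## Typing (Fig. 7) -/

inductive Typing {α : Type} (P : OPM α) : Ctx α → Expr α → Ty α → Bool → Prop where
  | unit : Typing P GCtx.empty (Expr.const Const.unit) Ty.unit false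
  | new : ∀ m : α,
      Typing P GCtx.empty (Expr.const (Const.new m))
        (Ty.arrow Ty.unit false (Ty.res m)) false
  | op : ∀ m₀ m₁ m₂ : α, P.mulLe m₁ m₂ m₀ →
      Typing P GCtx.empty (Expr.const (Const.op m₁))
        (Ty.arrow (Ty.res m₀) true (Ty.res m₂)) false
  | split : ∀ m₀ m₁ m₂ : α, P.mulLe m₁ m₂ m₀ →
      Typing P GCtx.empty (Expr.const (Const.split m₁ m₂))
        (Ty.arrow (Ty.res m₀) false (Ty.oprod (Ty.res m₁) (Ty.res m₂))) false
  | drop : ∀ m : α, P.le P.eps m →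
      Typing P GCtx.empty (Expr.const Const.drop)
        (Ty.arrow (Ty.res m) false Ty.unit) false
  | var : ∀ (x : ℕ) (T : Ty α),
      Typing P (GCtx.bind (Binding.var x T)) (Expr.var x) T false
  | loc : ∀ (l : ℕ) (m : α),
      Typing P (GCtx.bind (Binding.loc l m)) (Expr.loc l) (Ty.res m) false
  | abs : ∀ (Γ : Ctx α) (x : ℕ) (S T : Ty α) (M : Expr α) (e : Bool),
      x ∉ vdom Γ → isUnrCtx Γ →
      Typing P (GCtx.comma Γ (GCtx.bind (Binding.var x S))) M T e →
      Typing P Γ (Expr.abs x M) (Ty.arrow S e T) false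
  | uabs : ∀ (Γ : Ctx α) (x : ℕ) (S T : Ty α) (M : Expr α) (e : Bool),
      x ∉ vdom Γ →
      Typing P (GCtx.par Γ (GCtx.bind (Binding.var x S))) M T e →
      Typing P Γ (Expr.uabs x M) (Ty.uarrow S e T) false
  | rabs : ∀ (Γ : Ctx α) (x : ℕ) (S T : Ty α) (M : Expr α) (e : Bool),
      x ∉ vdom Γ →
      Typing P (GCtx.comma Γ (GCtx.bind (Binding.var x S))) M T e →
      Typing P Γ (Expr.rabs x M) (Ty.rarrow S e T) false
  | labs : ∀ (Γ : Ctx α) (x : ℕ) (S T : Ty α) (M : Expr α) (e : Bool),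
      x ∉ vdom Γ →
      Typing P (GCtx.comma (GCtx.bind (Binding.var x S)) Γ) M T e →
      Typing P Γ (Expr.labs x M) (Ty.larrow S e T) false
  | app : ∀ (Γ₁ Γ₂ : Ctx α) (M N : Expr α) (S T : Ty α) (e e₁ e₂ : Bool),
      Typing P Γ₁ M (Ty.arrow S e T) e₁ → Typing P Γ₂ N S e₂ →
      Typing P (GCtx.comma Γ₁ Γ₂) (Expr.app M N) T (e || e₁ || e₂)
  | uapp : ∀ (Γ₁ Γ₂ : Ctx α) (M N : Expr α) (S T : Ty α) (e e₁ e₂ : Bool),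
      Typing P Γ₁ M (Ty.uarrow S e T) e₁ → Typing P Γ₂ N S e₂ →
      Typing P (GCtx.par Γ₁ Γ₂) (Expr.uapp M N) T (e || e₁ || e₂)
  | rapp : ∀ (Γ₁ Γ₂ : Ctx α) (M N : Expr α) (S T : Ty α) (e e₁ : Bool),
      Typing P Γ₁ M (Ty.rarrow S e T) e₁ → Typing P Γ₂ N S false →
      Typing P (GCtx.comma Γ₁ Γ₂) (Expr.rapp M N) T (e || e₁)
  | lapp : ∀ (Γ₁ Γ₂ : Ctx α) (M N : Expr α) (S T : Ty α) (e e₂ : Bool),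
      Typing P Γ₂ M (Ty.larrow S e T) false → Typing P Γ₁ N S e₂ →
      Typing P (GCtx.comma Γ₁ Γ₂) (Expr.lapp M N) T (e || e₂)
  | upair : ∀ (Γ₁ Γ₂ : Ctx α) (M N : Expr α) (S T : Ty α) (e₁ e₂ : Bool),
      Typing P Γ₁ M S e₁ → Typing P Γ₂ N T e₂ →
      Typing P (GCtx.par Γ₁ Γ₂) (Expr.upair M N) (Ty.uprod S T) (e₁ || e₂)
  | opair : ∀ (Γ₁ Γ₂ : Ctx α) (M N : Expr α) (S T : Ty α) (e₁ e₂ : Bool),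
      (Ty.Ord S → e₂ = false) →
      Typing P Γ₁ M S e₁ → Typing P Γ₂ N T e₂ →
      Typing P (GCtx.comma Γ₁ Γ₂) (Expr.opair M N) (Ty.oprod S T) (e₁ || e₂)
  | ulet : ∀ (G : CtxPat α) (Γ : Ctx α) (x y : ℕ) (M N : Expr α)
        (S₁ S₂ T : Ty α) (e : Bool),
      x ≠ y → x ∉ vdom (GPat.fill G Γ) → y ∉ vdom (GPat.fill G Γ) →
      Typing P Γ M (Ty.uprod S₁ S₂) false →
      Typing P (GPat.fill G (GCtx.par (GCtx.bind (Binding.var x S₁))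
        (GCtx.bind (Binding.var y S₂)))) N T e →
      Typing P (GPat.fill G Γ) (Expr.ulet x y M N) T e
  | olet : ∀ (G : CtxPat α) (Γ : Ctx α) (x y : ℕ) (M N : Expr α)
        (S₁ S₂ T : Ty α) (e : Bool),
      x ≠ y → x ∉ vdom (GPat.fill G Γ) → y ∉ vdom (GPat.fill G Γ) →
      Typing P Γ M (Ty.oprod S₁ S₂) false →
      Typing P (GPat.fill G (GCtx.comma (GCtx.bind (Binding.var x S₁))
        (GCtx.bind (Binding.var y S₂)))) N T e →
      Typing P (GPat.fill G Γ) (Expr.olet x y M N) T e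
  | weaken : ∀ (Γ₁ Γ₂ : Ctx α) (M : Expr α) (T : Ty α) (e₁ e₂ : Bool),
      Typing P Γ₁ M T e₁ → SubC Γ₂ Γ₁ → e₁ ≤ e₂ →
      Typing P Γ₂ M T e₂

/-! ## Heaps -/

structure Heap (α : Type) where
  find : ℕ → Option (ℕ × α × α)
  fin : Set.Finite {l | find l ≠ none}

def Heap.dom {α : Type} (H : Heap α) : Set ℕ := {l | H.find l ≠ none}

def Heap.update {α : Type} (H : Heap α) (l : ℕ) (t : ℕ × α × α) : Heap α where
  find := fun l' => if l' = l then some t else H.find l'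
  fin := by
    have hsub : {l' | (if l' = l then some t else H.find l') ≠ none} ⊆
        insert l {l' | H.find l' ≠ none} := by
      intro x hx
      by_cases h : x = l
      · exact Set.mem_insert_iff.mpr (Or.inl h)
      · refine Set.mem_insert_iff.mpr (Or.inr ?_)
        simp only [Set.mem_setOf_eq, if_neg h] at hx
        exact hx
    exact Set.Finite.subset (Set.Finite.insert l H.fin) hsub

def Heap.erase {α : Type} (H : Heap α) (l : ℕ) : Heap α where
  find := fun l' => if l' = l then none else H.find l'
  fin := by
    apply Set.Finite.subset H.fin
    intro x hx
    simp only [Set.mem_setOf_eq] at hx ⊢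
    by_cases h : x = l
    · rw [if_pos h] at hx; exact absurd rfl hx
    · rw [if_neg h] at hx; exact hx

def Heap.empty (α : Type) : Heap α :=
  ⟨fun _ => none, Set.Finite.subset Set.finite_empty (fun _ hx => (hx rfl).elim)⟩

/-! ## Reduction -/

/-- Expression reduction `M →β M'`. -/
inductive BetaStep {α : Type} : Expr α → Expr α → Prop where
  | beta : ∀ (x : ℕ) (M V : Expr α), IsValue V →
      BetaStep (Expr.app (Expr.abs x M) V) (subst M V x)
  | ubeta : ∀ (x : ℕ) (M V : Expr α), IsValue V →
      BetaStep (Expr.uapp (Expr.uabs x M) V) (subst M V x)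
  | rbeta : ∀ (x : ℕ) (M V : Expr α), IsValue V →
      BetaStep (Expr.rapp (Expr.rabs x M) V) (subst M V x)
  | lbeta : ∀ (x : ℕ) (M V : Expr α), IsValue V →
      BetaStep (Expr.lapp (Expr.labs x M) V) (subst M V x)
  | uletv : ∀ (x y : ℕ) (M V₁ V₂ : Expr α), x ≠ y → IsValue V₁ → IsValue V₂ →
      BetaStep (Expr.ulet x y (Expr.upair V₁ V₂) M) (subst (subst M V₁ x) V₂ y)
  | oletv : ∀ (x y : ℕ) (M V₁ V₂ : Expr α), x ≠ y → IsValue V₁ → IsValue V₂ →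
      BetaStep (Expr.olet x y (Expr.opair V₁ V₂) M) (subst (subst M V₁ x) V₂ y)

/-- Configuration reduction `M | ℋ →γ M' | ℋ'`. -/
inductive CfgStep {α : Type} (P : OPM α) : Expr α → Heap α → Expr α → Heap α → Prop where
  | new : ∀ (H : Heap α) (l : ℕ) (m : α), l ∉ Heap.dom H →
      CfgStep P (Expr.app (Expr.const (Const.new m)) (Expr.const Const.unit)) H
        (Expr.loc l) (H.update l (0, m, P.eps))
  | op : ∀ (H : Heap α) (l n : ℕ) (m₀ m m' m'' : α),
      H.find l = some (n, m₀, m') → P.mul m' m = some m'' →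
      (∃ m₃ : α, P.mulLe m'' m₃ m₀) →
      CfgStep P (Expr.app (Expr.const (Const.op m)) (Expr.loc l)) H
        (Expr.loc l) (H.update l (n, m₀, m''))
  | cl1 : ∀ (H : Heap α) (l n : ℕ) (m₀ m : α),
      H.find l = some (n + 1, m₀, m) →
      CfgStep P (Expr.app (Expr.const Const.drop) (Expr.loc l)) H
        (Expr.const Const.unit) (H.update l (n, m₀, m))
  | cl2 : ∀ (H : Heap α) (l : ℕ) (m₀ m : α),
      H.find l = some (0, m₀, m) → P.le m m₀ →
      CfgStep P (Expr.app (Expr.const Const.drop) (Expr.loc l)) H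
        (Expr.const Const.unit) (H.erase l)
  | sp : ∀ (H : Heap α) (l n : ℕ) (m₀ m m₁ m₂ : α),
      H.find l = some (n, m₀, m) →
      CfgStep P (Expr.app (Expr.const (Const.split m₁ m₂)) (Expr.loc l)) H
        (Expr.opair (Expr.loc l) (Expr.loc l)) (H.update l (n + 1, m₀, m))

/-- Call-by-value evaluation contexts (left-to-right, except that
    `<`-applications evaluate right-to-left). -/
inductive ECtx (α : Type) : Type where
  | hole : ECtx α
  | appL : ECtx α → Expr α → ECtx α
  | appR : (V : Expr α) → IsValue V → ECtx α → ECtx α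
  | uappL : ECtx α → Expr α → ECtx α
  | uappR : (V : Expr α) → IsValue V → ECtx α → ECtx α
  | rappL : ECtx α → Expr α → ECtx α
  | rappR : (V : Expr α) → IsValue V → ECtx α → ECtx α
  | lappL : ECtx α → (V : Expr α) → IsValue V → ECtx α
  | lappR : Expr α → ECtx α → ECtx α
  | upairL : ECtx α → Expr α → ECtx α
  | upairR : (V : Expr α) → IsValue V → ECtx α → ECtx α
  | opairL : ECtx α → Expr α → ECtx α
  | opairR : (V : Expr α) → IsValue V → ECtx α → ECtx α
  | uletE : ℕ → ℕ → ECtx α → Expr α → ECtx α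
  | oletE : ℕ → ℕ → ECtx α → Expr α → ECtx α

def ECtx.plug {α : Type} : ECtx α → Expr α → Expr α
  | .hole, M => M
  | .appL E N, M => Expr.app (E.plug M) N
  | .appR V _ E, M => Expr.app V (E.plug M)
  | .uappL E N, M => Expr.uapp (E.plug M) N
  | .uappR V _ E, M => Expr.uapp V (E.plug M)
  | .rappL E N, M => Expr.rapp (E.plug M) N
  | .rappR V _ E, M => Expr.rapp V (E.plug M)
  | .lappL E V _, M => Expr.lapp (E.plug M) V
  | .lappR N E, M => Expr.lapp N (E.plug M)
  | .upairL E N, M => Expr.upair (E.plug M) N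
  | .upairR V _ E, M => Expr.upair V (E.plug M)
  | .opairL E N, M => Expr.opair (E.plug M) N
  | .opairR V _ E, M => Expr.opair V (E.plug M)
  | .uletE x y E N, M => Expr.ulet x y (E.plug M) N
  | .oletE x y E N, M => Expr.olet x y (E.plug M) N

/-- Contextual reduction `M | ℋ → M' | ℋ'`. -/
inductive Step {α : Type} (P : OPM α) : Expr α → Heap α → Expr α → Heap α → Prop where
  | exp : ∀ (E : ECtx α) (M M' : Expr α) (H : Heap α),
      BetaStep M M' → Step P (E.plug M) H (E.plug M') H
  | cfg : ∀ (E : ECtx α) (M M' : Expr α) (H H' : Heap α),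
      CfgStep P M H M' H' → Step P (E.plug M) H (E.plug M') H'

/-! ## Run-time contexts, focus, heap typing -/

/-- Focus on location `l`: replace every binding of a location other than `l`
    by the empty context. -/
def focus {α : Type} : Ctx α → ℕ → Ctx α
  | GCtx.empty, _ => GCtx.empty
  | GCtx.bind (Binding.loc l' m), l =>
      if l' = l then GCtx.bind (Binding.loc l' m) else GCtx.empty
  | GCtx.bind (Binding.var x T), _ => GCtx.bind (Binding.var x T)
  | GCtx.comma Γ₁ Γ₂, l => GCtx.comma (focus Γ₁ l) (focus Γ₂ l)
  | GCtx.par Γ₁ Γ₂, l => GCtx.par (focus Γ₁ l) (focus Γ₂ l)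

/-- A run-time context is order-defined if every focus graph has a unique
    topological ordering. -/
def orderDefined {α : Type} (Γ : Ctx α) : Prop :=
  ∀ l : ℕ, Graph.Traceable (interpC (focus Γ l))

def bUsage {α : Type} (P : OPM α) : Binding α → α
  | Binding.loc _ m => m
  | Binding.var _ _ => P.eps

def listProd {α : Type} (P : OPM α) : List α → Option α
  | [] => some P.eps
  | m :: ms => (listProd P ms).bind fun r => P.mul m r

/-- `focusUsage P Γ l u` : the usage projection of `⟨Γ⟩_l` is defined and
    equal to `u` (the ⊙-product of the usages along a topological ordering of
    the focus graph). -/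
def focusUsage {α : Type} (P : OPM α) (Γ : Ctx α) (l : ℕ) (u : α) : Prop :=
  ∃ f : Equiv.Perm (Fin (interpC (focus Γ l)).n),
    Graph.IsTopOrder (interpC (focus Γ l)) f ∧
      listProd P (List.ofFn fun k =>
        bUsage P ((interpC (focus Γ l)).label (f k).val)) = some u

/-- Heap typing `C ⊢ ℋ`. -/
def HeapTy {α : Type} (P : OPM α) (C : Ctx α) (H : Heap α) : Prop :=
  orderDefined C ∧
  ldom C = Heap.dom H ∧
  ∀ (l n : ℕ) (m₀ m : α), H.find l = some (n, m₀, m) →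
    (interpC (focus C l)).n = n + 1 ∧
    ∃ u r : α, focusUsage P C l u ∧ P.mul m u = some r ∧ P.le r m₀

/-!
In each of the five rules the redex is `c V` with `V` either `unit` or a location `l`. Inverting
the typing derivation (weakening only permutes the ordered bindings) shows that `C` is empty or
the single binding `l : [m₀]`, and `C'` is taken to be the bindings of `l` that type the result.
Every other location has the same focus graph before and after the step, so heap typing there is
untouched. At `l`, the focus graph of `(C, C'')` is that of `⟨C''⟩_l` with one vertex prepended;
its topological orderings are those of `⟨C''⟩_l` with the new vertex first, so traceability is
preserved and the usage gains one factor on the left. The usage bound then follows from the side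
condition in the type of the constant (`m₁ ⊙ m₂ ≤ m₀`, `ε ≤ m₀`) by monotonicity and
associativity.
-/

variable {α B : Type}

namespace OPM

variable (P : OPM α) {a b c t u v x z : α}

theorem mul_assoc_of_some (hab : P.mul a b = some x) (hbc : P.mul b c = some z) :
    P.mul x c = P.mul a z := by
  simpa [hab, hbc] using P.mul_assoc a b c

theorem exists_mul_of_mul_mul (hab : P.mul a b = some x) (hxc : P.mul x c = some u) :
    ∃ z, P.mul b c = some z ∧ P.mul a z = some u := by
  have h := P.mul_assoc a b c
  rw [hab, Option.bind_some, hxc] at h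
  exact Option.bind_eq_some_iff.1 h.symm

theorem exists_mul_mulLe_of_le (hba : P.le b a) (hav : P.mul a v = some u)
    (h : P.mulLe t u c) : ∃ w, P.mul b v = some w ∧ P.mulLe t w c := by
  obtain ⟨w, hw, hwu⟩ := P.mul_mono b a v v u hba (P.le_refl v) hav
  obtain ⟨r, hr, hrc⟩ := h
  obtain ⟨r', hr', hr'r⟩ := P.mul_mono t t w u r (P.le_refl t) hwu hr
  exact ⟨w, hw, r', hr', P.le_trans _ _ _ hr'r hrc⟩

end OPM

namespace Graph

open Equiv

theorem ext {G G' : Graph B} (hn : G.n = G'.n) (hlabel : G.label = G'.label)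
    (hedge : G.edge = G'.edge) : G = G' := by
  cases G; cases G'; cases hn; cases hlabel; cases hedge; rfl

theorem iso_refl (G : Graph B) : G.Iso G :=
  ⟨rfl, id, Function.bijective_id, fun _ _ => Iff.rfl, fun _ => rfl⟩

theorem join_of_n_eq_zero {A : Graph B} (G : Graph B) (hA : A.n = 0) : A.join G = G := by
  have := A.edge_lt
  refine ext (by simp [join, hA]) (by ext i; simp [join, hA]) ?_
  ext i j
  simp only [join]
  grind

theorem join_assoc (A G D : Graph B) : (A.join G).join D = A.join (G.join D) := by
  have := A.edge_lt
  refine ext (Nat.add_assoc _ _ _) ?_ ?_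
  · ext i
    simp only [join]
    grind
  · ext i j
    simp only [join]
    grind

/-- An `abbrev`, so that `Fin (G.cons b).n` is seen as `Fin (G.n + 1)` by instance search and
`simp`, and `Equiv.Perm.decomposeFin` applies to its orderings. -/
abbrev cons (G : Graph B) (b : B) : Graph B where
  n := G.n + 1
  label
    | 0 => b
    | i + 1 => G.label i
  edge
    | 0, j + 1 => j < G.n
    | i + 1, j + 1 => G.edge i j
    | _, 0 => False
  edge_lt := by
    rintro (_ | i) (_ | j) h
    · exact h.elim
    · exact ⟨by omega, by omega⟩
    · exact h.elim
    · have := G.edge_lt i j h; omega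

theorem join_eq_cons {A : Graph B} (G : Graph B) {b : B} (hn : A.n = 1) (hlabel : A.label 0 = b)
    (hedge : ∀ i j, ¬ A.edge i j) : A.join G = G.cons b := by
  refine ext (by simp [join, hn]; omega) ?_ ?_
  · ext (_ | i)
    · simp [join, hn, hlabel]
    · simp [join, hn]
  · ext (_ | i) (_ | j)
    · simp [join, hn, hedge]
    · simp [join, hn, hedge]; omega
    · simp [join, hn, hedge]
    · simp [join, hn, hedge]

theorem isTopOrder_iff (G : Graph B) (f : Perm (Fin G.n)) :
    G.IsTopOrder f ↔ ∀ a b : Fin G.n, G.edge (f a) (f b) → a < b := by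
  refine ⟨fun h a b he => by simpa using h (f a) (f b) he, fun h i j he => h _ _ ?_⟩
  simpa using he

theorem isTopOrder_cons_zero_iff (G : Graph B) (b : B) (τ : Perm (Fin G.n)) :
    (G.cons b).IsTopOrder (Perm.decomposeFin.symm (0, τ)) ↔ G.IsTopOrder τ := by
  refine ((isTopOrder_iff (G.cons b) _).trans ?_).trans (isTopOrder_iff G τ).symm
  constructor
  · intro h i j he
    simpa using h i.succ j.succ (by simpa using he)
  · intro h i j he
    induction i using Fin.cases with
    | zero =>
      induction j using Fin.cases with
      | zero => simp at he
      | succ j => exact Fin.succ_pos j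
    | succ i =>
      induction j using Fin.cases with
      | zero => simp at he
      | succ j => simpa using h i j (by simpa using he)

/-- Every topological ordering of `G.cons b` puts the new vertex first. -/
theorem isTopOrder_cons_iff (G : Graph B) (b : B) (p : Fin (G.n + 1)) (τ : Perm (Fin G.n)) :
    (G.cons b).IsTopOrder (Perm.decomposeFin.symm (p, τ)) ↔ p = 0 ∧ G.IsTopOrder τ := by
  refine ⟨fun h => ?_, fun ⟨hp, hτ⟩ => hp ▸ (isTopOrder_cons_zero_iff G b τ).2 hτ⟩
  suffices hp : p = 0 from ⟨hp, (isTopOrder_cons_zero_iff G b τ).1 (hp ▸ h)⟩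
  by_contra hp
  obtain ⟨j, rfl⟩ := Fin.exists_succ_eq.2 hp
  set σ := Perm.decomposeFin.symm (j.succ, τ)
  exact Fin.not_lt_zero _ ((isTopOrder_iff (G.cons b) σ).1 h (σ.symm 0) 0 (by simp [σ]))

theorem traceable_of_n_eq_zero {G : Graph B} (h : G.n = 0) : G.Traceable := by
  have : IsEmpty (Fin G.n) := by rw [h]; infer_instance
  exact ⟨1, fun i => isEmptyElim i, fun _ _ => Subsingleton.elim _ _⟩

theorem traceable_cons_iff (G : Graph B) (b : B) : (G.cons b).Traceable ↔ G.Traceable := by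
  unfold Traceable
  rw [← Perm.decomposeFin.symm.existsUnique_congr_right]
  simp only [Prod.forall, isTopOrder_cons_iff, ExistsUnique, Prod.exists]
  constructor
  · rintro ⟨p, τ, ⟨rfl, hτ⟩, huniq⟩
    exact ⟨τ, hτ, fun τ' hτ' => (Prod.ext_iff.1 (huniq 0 τ' ⟨rfl, hτ'⟩)).2⟩
  · rintro ⟨τ, hτ, huniq⟩
    exact ⟨0, τ, ⟨rfl, hτ⟩, fun p τ' ⟨hp, hτ'⟩ => Prod.ext hp (huniq τ' hτ')⟩

def labels (G : Graph B) : List B := List.ofFn fun i : Fin G.n => G.label i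

theorem labels_join (A G : Graph B) : (A.join G).labels = A.labels ++ G.labels := by
  simp [labels, join, List.ofFn_add]

theorem labels_union (A G : Graph B) : (A.union G).labels = A.labels ++ G.labels :=
  labels_join A G

theorem Iso.labels_perm {G G' : Graph B} (h : G.Iso G') : G.labels.Perm G'.labels := by
  obtain ⟨hn, f, hf, -, hlabel⟩ := h
  have : G'.labels = List.ofFn fun i : Fin G.n => G.label (f i) := by
    rw [labels, List.ofFn_congr hn.symm]
    simp [hlabel]
  rw [this]
  exact (Perm.ofFn_comp_perm (Equiv.ofBijective f hf) fun i => G.label i).symm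

theorem Spanning.labels_eq {G G' : Graph B} (h : G.Spanning G') : G.labels = G'.labels := by
  obtain ⟨hn, hlabel, -⟩ := h
  rw [labels, labels, List.ofFn_congr hn]
  exact congrArg List.ofFn (funext fun i => hlabel i (by simp [hn]))

end Graph

/-- `focusUsage P Γ l` is `HasUsage P (interpC (focus Γ l))` by definition. -/
def HasUsage (P : OPM α) (G : Graph (Binding α)) (u : α) : Prop :=
  ∃ f : Equiv.Perm (Fin G.n), G.IsTopOrder f ∧
    listProd P (List.ofFn fun k => bUsage P (G.label (f k).val)) = some u

theorem hasUsage_of_n_eq_zero (P : OPM α) {G : Graph (Binding α)} (h : G.n = 0) :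
    HasUsage P G P.eps := by
  have : IsEmpty (Fin G.n) := by rw [h]; infer_instance
  exact ⟨1, fun i => isEmptyElim i, by simp [List.ofFn_eq_nil_iff.2 h, listProd]⟩

theorem hasUsage_cons_iff (P : OPM α) (G : Graph (Binding α)) (b : Binding α) (u : α) :
    HasUsage P (G.cons b) u ↔ ∃ v, HasUsage P G v ∧ P.mul (bUsage P b) v = some u := by
  unfold HasUsage
  rw [← Equiv.Perm.decomposeFin.symm.exists_congr_right]
  simp only [Prod.exists, Graph.isTopOrder_cons_iff]
  constructor
  · rintro ⟨p, τ, ⟨rfl, hτ⟩, hprod⟩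
    simp only [List.ofFn_succ, listProd] at hprod
    obtain ⟨v, hv, hu⟩ := Option.bind_eq_some_iff.1 hprod
    exact ⟨v, ⟨τ, hτ, by simpa using hv⟩, by simpa using hu⟩
  · rintro ⟨v, ⟨τ, hτ, hv⟩, hu⟩
    refine ⟨0, τ, ⟨rfl, hτ⟩, ?_⟩
    simp [List.ofFn_succ, listProd, hv, hu]

def ordBindings (Γ : Ctx α) : List (Binding α) := (GCtx.toList Γ).filter fun b => !b.unrB

theorem labels_interpC (Γ : Ctx α) : (interpC Γ).labels = ordBindings Γ := by
  induction Γ with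
  | empty => rfl
  | bind b =>
    cases hb : b.unrB <;>
      simp [interpC, GCtx.interpG, ordBindings, GCtx.toList, Graph.labels, hb, Graph.zero]
  | comma Γ₁ Γ₂ ih₁ ih₂ =>
    simp only [interpC, GCtx.interpG] at ih₁ ih₂ ⊢
    simp [Graph.labels_join, ih₁, ih₂, ordBindings, GCtx.toList]
  | par Γ₁ Γ₂ ih₁ ih₂ =>
    simp only [interpC, GCtx.interpG] at ih₁ ih₂ ⊢
    simp [Graph.labels_union, ih₁, ih₂, ordBindings, GCtx.toList]

theorem n_interpC (Γ : Ctx α) : (interpC Γ).n = (ordBindings Γ).length := by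
  rw [← labels_interpC, Graph.labels, List.length_ofFn]

theorem SubC.ordBindings_perm {Γ Δ : Ctx α} (h : SubC Γ Δ) :
    (ordBindings Γ).Perm (ordBindings Δ) := by
  obtain ⟨⟨G₁, G₂, h₁, h₂, h₃⟩, -⟩ := h
  rw [← labels_interpC, ← labels_interpC]
  exact (h₁.labels_perm.trans (.of_eq h₂.labels_eq)).trans h₃.labels_perm

theorem subC_refl (Γ : Ctx α) : SubC Γ Γ :=
  ⟨⟨_, _, Graph.iso_refl _, ⟨rfl, fun _ _ => rfl, fun _ _ => id⟩, Graph.iso_refl _⟩, subset_rfl⟩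

theorem interpC_edge_irrefl (Γ : Ctx α) (i : ℕ) : ¬ (interpC Γ).edge i i := by
  induction Γ generalizing i with
  | empty => exact id
  | bind b => cases hb : b.unrB <;> simp [interpC, GCtx.interpG, hb, Graph.zero]
  | comma Γ₁ Γ₂ ih₁ ih₂ =>
    rintro (h | ⟨-, -, h⟩ | ⟨h₁, h₂, -⟩)
    exacts [ih₁ i h, ih₂ _ h, by omega]
  | par Γ₁ Γ₂ ih₁ ih₂ =>
    rintro (h | ⟨-, -, h⟩)
    exacts [ih₁ i h, ih₂ _ h]

theorem interpC_join_eq_cons {Γ : Ctx α} {b : Binding α} (h : ordBindings Γ = [b])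
    (G : Graph (Binding α)) : (interpC Γ).join G = G.cons b := by
  have hn : (interpC Γ).n = 1 := by simp [n_interpC, h]
  refine Graph.join_eq_cons G hn ?_ fun i j he => ?_
  · have := labels_interpC Γ
    rw [h, Graph.labels] at this
    simpa [hn] using this
  · have := (interpC Γ).edge_lt i j he
    obtain rfl : i = j := by omega
    exact interpC_edge_irrefl Γ i he

def Binding.inFocus (l : ℕ) : Binding α → Bool
  | .loc l' _ => decide (l' = l)
  | .var _ _ => true

theorem toList_focus (Γ : Ctx α) (l : ℕ) :
    GCtx.toList (focus Γ l) = (GCtx.toList Γ).filter (Binding.inFocus l) := by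
  induction Γ with
  | empty => rfl
  | bind b =>
    cases b with
    | var x T => rfl
    | loc l' m => by_cases h : l' = l <;> simp [focus, GCtx.toList, Binding.inFocus, h]
  | comma Γ₁ Γ₂ ih₁ ih₂ => simp [focus, GCtx.toList, ih₁, ih₂]
  | par Γ₁ Γ₂ ih₁ ih₂ => simp [focus, GCtx.toList, ih₁, ih₂]

theorem isRuntime.ordBindings_eq {Γ : Ctx α} (hΓ : isRuntime Γ) :
    ordBindings Γ = GCtx.toList Γ :=
  List.filter_eq_self.2 fun b hb => by obtain ⟨l, m, rfl⟩ := hΓ b hb; rfl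

theorem isRuntime_empty : isRuntime (GCtx.empty : Ctx α) := by
  simp [isRuntime, GCtx.toList]

theorem isRuntime_bind_loc (l : ℕ) (m : α) : isRuntime (GCtx.bind (Binding.loc l m)) := by
  simp [isRuntime, GCtx.toList]

theorem isRuntime_comma {Γ Δ : Ctx α} (hΓ : isRuntime Γ) (hΔ : isRuntime Δ) :
    isRuntime (GCtx.comma Γ Δ) := by
  simpa [isRuntime, GCtx.toList, or_imp, forall_and] using And.intro hΓ hΔ

@[simp] theorem ldom_empty : ldom (GCtx.empty : Ctx α) = ∅ := by
  simp [ldom, GCtx.toList]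

@[simp] theorem ldom_bind_loc (l : ℕ) (m : α) : ldom (GCtx.bind (Binding.loc l m)) = {l} := by
  ext l'
  simp [ldom, GCtx.toList]

@[simp] theorem ldom_comma (Γ Δ : Ctx α) : ldom (GCtx.comma Γ Δ) = ldom Γ ∪ ldom Δ := by
  ext l
  simp [ldom, GCtx.toList, exists_or]

theorem ldom_eq_empty_of_toList {Γ : Ctx α} (h : GCtx.toList Γ = []) : ldom Γ = ∅ := by
  ext l'
  simp [ldom, h]

theorem ldom_eq_singleton_of_toList {Γ : Ctx α} {l : ℕ} {m : α}
    (h : GCtx.toList Γ = [.loc l m]) : ldom Γ = {l} := by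
  ext l'
  simp [ldom, h]

theorem mem_ldom_iff_n_focus_pos {Γ : Ctx α} (hΓ : isRuntime Γ) (l : ℕ) :
    l ∈ ldom Γ ↔ 0 < (interpC (focus Γ l)).n := by
  simp only [n_interpC, ordBindings, toList_focus, List.length_pos_iff_exists_mem,
    List.mem_filter, ldom, Set.mem_ofPred_eq]
  constructor
  · rintro ⟨m, hm⟩
    exact ⟨_, ⟨hm, by simp [Binding.inFocus]⟩, rfl⟩
  · rintro ⟨b, ⟨hb, hl⟩, -⟩
    obtain ⟨l', m, rfl⟩ := hΓ b hb
    obtain rfl : l' = l := by simpa [Binding.inFocus] using hl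
    exact ⟨m, hb⟩

theorem interpC_focus_comma (Γ Δ : Ctx α) (l : ℕ) :
    interpC (focus (GCtx.comma Γ Δ) l) = (interpC (focus Γ l)).join (interpC (focus Δ l)) :=
  rfl

theorem interpC_focus_comma_empty (Δ : Ctx α) (l : ℕ) :
    interpC (focus (GCtx.comma GCtx.empty Δ) l) = interpC (focus Δ l) :=
  Graph.join_of_n_eq_zero _ rfl

theorem interpC_focus_comma_of_not_mem {Γ : Ctx α} {l : ℕ} (hΓ : isRuntime Γ) (h : l ∉ ldom Γ)
    (Δ : Ctx α) : interpC (focus (GCtx.comma Γ Δ) l) = interpC (focus Δ l) :=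
  Graph.join_of_n_eq_zero (A := interpC (focus Γ l)) _
    (by simpa [mem_ldom_iff_n_focus_pos hΓ] using h)

theorem interpC_focus_join_of_toList {Γ : Ctx α} {l : ℕ} {m : α}
    (h : GCtx.toList Γ = [.loc l m]) (G : Graph (Binding α)) :
    (interpC (focus Γ l)).join G = G.cons (.loc l m) :=
  interpC_join_eq_cons (by simp [ordBindings, toList_focus, h, Binding.inFocus, Binding.unrB]) G

inductive ConstTy (P : OPM α) : Const α → Ty α → Prop
  | unit : ConstTy P .unit .unit
  | new (m : α) : ConstTy P (.new m) (.arrow .unit false (.res m))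
  | op (m₀ m₁ m₂ : α) : P.mulLe m₁ m₂ m₀ → ConstTy P (.op m₁) (.arrow (.res m₀) true (.res m₂))
  | split (m₀ m₁ m₂ : α) : P.mulLe m₁ m₂ m₀ →
      ConstTy P (.split m₁ m₂) (.arrow (.res m₀) false (.oprod (.res m₁) (.res m₂)))
  | drop (m : α) : P.le P.eps m → ConstTy P .drop (.arrow (.res m) false .unit)

namespace Typing

variable {P : OPM α} {Γ : Ctx α} {T : Ty α} {e : Bool}

theorem of_effect_false {M : Expr α} (h : Typing P Γ M T false) (e : Bool) : Typing P Γ M T e :=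
  weaken _ _ _ _ _ _ h (subC_refl Γ) (Bool.false_le e)

theorem inv_const {c : Const α} (h : Typing P Γ (.const c) T e) :
    ordBindings Γ = [] ∧ ConstTy P c T := by
  generalize hM : Expr.const c = M at h
  induction h with
  | unit => cases hM; exact ⟨rfl, .unit⟩
  | new m => cases hM; exact ⟨rfl, .new m⟩
  | op _ _ _ h => cases hM; exact ⟨rfl, .op _ _ _ h⟩
  | split _ _ _ h => cases hM; exact ⟨rfl, .split _ _ _ h⟩
  | drop _ h => cases hM; exact ⟨rfl, .drop _ h⟩
  | weaken _ _ _ _ _ _ _ hsub _ ih =>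
    obtain ⟨hΓ, hc⟩ := ih hM
    exact ⟨List.perm_nil.1 (hΓ ▸ hsub.ordBindings_perm), hc⟩
  | _ => cases hM

theorem inv_loc {l : ℕ} (h : Typing P Γ (.loc l) T e) :
    ∃ m, T = .res m ∧ ordBindings Γ = [.loc l m] := by
  generalize hM : Expr.loc l = M at h
  induction h with
  | loc => cases hM; exact ⟨_, rfl, rfl⟩
  | weaken _ _ _ _ _ _ _ hsub _ ih =>
    obtain ⟨m, hT, hΓ⟩ := ih hM
    exact ⟨m, hT, List.perm_singleton.1 (hΓ ▸ hsub.ordBindings_perm)⟩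
  | _ => cases hM

theorem inv_app {M N : Expr α} (h : Typing P Γ (.app M N) T e) :
    ∃ (Γ₁ Γ₂ : Ctx α) (S : Ty α) (e' e₁ e₂ : Bool), Typing P Γ₁ M (.arrow S e' T) e₁ ∧
      Typing P Γ₂ N S e₂ ∧ (ordBindings Γ).Perm (ordBindings Γ₁ ++ ordBindings Γ₂) := by
  generalize hM : Expr.app M N = L at h
  induction h with
  | app Γ₁ Γ₂ _ _ S _ e' e₁ e₂ h₁ h₂ =>
    cases hM
    exact ⟨Γ₁, Γ₂, S, e', e₁, e₂, h₁, h₂, by simp [ordBindings, GCtx.toList]⟩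
  | weaken _ _ _ _ _ _ _ hsub _ ih =>
    obtain ⟨Δ₁, Δ₂, S, e', d₁, d₂, h₁, h₂, hΓ⟩ := ih hM
    exact ⟨Δ₁, Δ₂, S, e', d₁, d₂, h₁, h₂, hsub.ordBindings_perm.trans hΓ⟩
  | _ => cases hM

theorem inv_app_const_unit {c : Const α} (h : Typing P Γ (.app (.const c) (.const .unit)) T e) :
    ∃ e', ConstTy P c (.arrow .unit e' T) ∧ ordBindings Γ = [] := by
  obtain ⟨Γ₁, Γ₂, S, e', _, _, h₁, h₂, hΓ⟩ := h.inv_app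
  obtain ⟨hΓ₁, hc⟩ := h₁.inv_const
  obtain ⟨hΓ₂, ⟨⟩⟩ := h₂.inv_const
  exact ⟨e', hc, by simpa [hΓ₁, hΓ₂] using hΓ⟩

theorem inv_app_const_loc {c : Const α} {l : ℕ}
    (h : Typing P Γ (.app (.const c) (.loc l)) T e) :
    ∃ m e', ConstTy P c (.arrow (.res m) e' T) ∧ ordBindings Γ = [.loc l m] := by
  obtain ⟨Γ₁, Γ₂, S, e', _, _, h₁, h₂, hΓ⟩ := h.inv_app
  obtain ⟨hΓ₁, hc⟩ := h₁.inv_const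
  obtain ⟨m, rfl, hΓ₂⟩ := h₂.inv_loc
  exact ⟨m, e', hc, by simpa [hΓ₁, hΓ₂] using hΓ⟩

end Typing

namespace Heap

@[simp] theorem find_update_self (H : Heap α) (l : ℕ) (x : ℕ × α × α) :
    (H.update l x).find l = some x := by
  simp [update]

theorem find_update_of_ne (H : Heap α) {l l' : ℕ} (x : ℕ × α × α) (h : l' ≠ l) :
    (H.update l x).find l' = H.find l' := by
  simp [update, h]

@[simp] theorem find_erase_self (H : Heap α) (l : ℕ) : (H.erase l).find l = none := by
  simp [erase]

theorem find_erase_of_ne (H : Heap α) {l l' : ℕ} (h : l' ≠ l) :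
    (H.erase l).find l' = H.find l' := by
  simp [erase, h]

end Heap

/-- Heap typing at a single location: `G` is the focus graph there and the option is the heap
cell. -/
def LocTy (P : OPM α) (G : Graph (Binding α)) : Option (ℕ × α × α) → Prop
  | none => G.Traceable ∧ G.n = 0
  | some (n, m₀, m) => G.Traceable ∧ G.n = n + 1 ∧ ∃ u, HasUsage P G u ∧ P.mulLe m u m₀

theorem heapTy_iff (P : OPM α) {Γ : Ctx α} (hΓ : isRuntime Γ) (H : Heap α) :
    HeapTy P Γ H ↔ ∀ l, LocTy P (interpC (focus Γ l)) (H.find l) := by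
  constructor
  · rintro ⟨htr, hdom, hloc⟩ l
    cases hx : H.find l with
    | none =>
      refine ⟨htr l, Nat.eq_zero_of_not_pos fun hpos => ?_⟩
      have : l ∈ H.dom := hdom ▸ (mem_ldom_iff_n_focus_pos hΓ l).2 hpos
      exact this hx
    | some x =>
      obtain ⟨n, m₀, m⟩ := x
      obtain ⟨hn, u, r, hu, hr, hrm⟩ := hloc l n m₀ m hx
      exact ⟨htr l, hn, u, hu, r, hr, hrm⟩
  · intro h
    refine ⟨fun l => ?_, Set.ext fun l => ?_, fun l n m₀ m hx => ?_⟩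
    · have hl := h l
      revert hl
      cases H.find l <;> exact fun hl => hl.1
    · have hl := h l
      rw [mem_ldom_iff_n_focus_pos hΓ]
      cases hx : H.find l <;> simp_all [Heap.dom, LocTy]
    · have hl := h l
      rw [hx] at hl
      obtain ⟨-, hn, u, hu, r, hr, hrm⟩ := hl
      exact ⟨hn, u, r, hu, hr, hrm⟩

theorem HeapTy.frame {P : OPM α} {C C' C'' : Ctx α} {H H' : Heap α} {l : ℕ}
    (hC : isRuntime C) (hC' : isRuntime C') (hC'' : isRuntime C'')
    (hCl : ldom C ⊆ {l}) (hC'l : ldom C' ⊆ {l}) (hH : ∀ l' ≠ l, H'.find l' = H.find l')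
    (hl : LocTy P (interpC (focus (GCtx.comma C C'') l)) (H.find l) →
      LocTy P (interpC (focus (GCtx.comma C' C'') l)) (H'.find l))
    (hheap : HeapTy P (GCtx.comma C C'') H) : HeapTy P (GCtx.comma C' C'') H' := by
  rw [heapTy_iff P (isRuntime_comma hC hC'')] at hheap
  rw [heapTy_iff P (isRuntime_comma hC' hC'')]
  intro l'
  by_cases hl' : l' = l
  · subst hl'
    exact hl (hheap l')
  · have hnot {Γ : Ctx α} (h : ldom Γ ⊆ {l}) : l' ∉ ldom Γ := fun h' => hl' (h h')
    have := hheap l'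
    rwa [hH l' hl', interpC_focus_comma_of_not_mem hC' (hnot hC'l),
      ← interpC_focus_comma_of_not_mem hC (hnot hCl)]

section LocTy

variable {P : OPM α} {G : Graph (Binding α)} {l n : ℕ} {m m₀ m₁ m₂ t M₀ : α}

theorem locTy_after_new (h : LocTy P G none) (l : ℕ) (m : α) :
    LocTy P (G.cons (.loc l m)) (some (0, m, P.eps)) := by
  obtain ⟨-, hn⟩ := h
  refine ⟨(Graph.traceable_cons_iff G _).2 (Graph.traceable_of_n_eq_zero hn), by simp [hn], m,
    (hasUsage_cons_iff P G _ m).2 ⟨P.eps, hasUsage_of_n_eq_zero P hn, P.mul_eps m⟩,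
    m, P.eps_mul m, P.le_refl m⟩

theorem locTy_after_op {t' : α} (hle : P.mulLe m m₂ M₀) (ht : P.mul t m = some t')
    (h : LocTy P (G.cons (.loc l M₀)) (some (n, m₀, t))) :
    LocTy P (G.cons (.loc l m₂)) (some (n, m₀, t')) := by
  obtain ⟨htr, hn, u, hu, hut⟩ := h
  obtain ⟨v, hv, hvu⟩ := (hasUsage_cons_iff P G _ u).1 hu
  obtain ⟨p, hp, hpM₀⟩ := hle
  -- `t' ⊙ (m₂ ⊙ v) = t ⊙ ((m ⊙ m₂) ⊙ v) ≤ t ⊙ (M₀ ⊙ v) ≤ m₀`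
  obtain ⟨w, hw, r, hr, hrm₀⟩ := P.exists_mul_mulLe_of_le hpM₀ hvu hut
  obtain ⟨q, hq, hmq⟩ := P.exists_mul_of_mul_mul hp hw
  refine ⟨by simpa only [Graph.traceable_cons_iff] using htr, hn, q,
    (hasUsage_cons_iff P G _ q).2 ⟨v, hv, hq⟩, r, ?_, hrm₀⟩
  rw [P.mul_assoc_of_some ht hmq, hr]

theorem locTy_after_drop_succ (hle : P.le P.eps M₀)
    (h : LocTy P (G.cons (.loc l M₀)) (some (n + 1, m₀, t))) : LocTy P G (some (n, m₀, t)) := by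
  obtain ⟨htr, hn, u, hu, hut⟩ := h
  obtain ⟨v, hv, hvu⟩ := (hasUsage_cons_iff P G _ u).1 hu
  obtain ⟨w, hw, hwt⟩ := P.exists_mul_mulLe_of_le hle hvu hut
  rw [P.eps_mul, Option.some_inj] at hw
  exact ⟨(Graph.traceable_cons_iff G _).1 htr, by simpa using hn, v, hv, hw ▸ hwt⟩

theorem locTy_after_drop_zero {b : Binding α} (h : LocTy P (G.cons b) (some (0, m₀, t))) :
    LocTy P G none :=
  ⟨(Graph.traceable_cons_iff G _).1 h.1, by simpa using h.2.1⟩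

theorem locTy_after_split (hle : P.mulLe m₁ m₂ M₀)
    (h : LocTy P (G.cons (.loc l M₀)) (some (n, m₀, t))) :
    LocTy P ((G.cons (.loc l m₂)).cons (.loc l m₁)) (some (n + 1, m₀, t)) := by
  obtain ⟨htr, hn, u, hu, hut⟩ := h
  obtain ⟨v, hv, hvu⟩ := (hasUsage_cons_iff P G _ u).1 hu
  obtain ⟨p, hp, hpM₀⟩ := hle
  -- `m₁ ⊙ (m₂ ⊙ v) = (m₁ ⊙ m₂) ⊙ v ≤ M₀ ⊙ v`
  obtain ⟨w, hw, hwt⟩ := P.exists_mul_mulLe_of_le hpM₀ hvu hut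
  obtain ⟨q, hq, hmq⟩ := P.exists_mul_of_mul_mul hp hw
  refine ⟨by simpa only [Graph.traceable_cons_iff] using htr, by simpa using hn, w,
    (hasUsage_cons_iff P _ _ w).2 ⟨q, (hasUsage_cons_iff P G _ q).2 ⟨v, hv, hq⟩, hmq⟩, hwt⟩

end LocTy

section HeapTy

variable {P : OPM α} {C C'' : Ctx α} {H : Heap α} {l n : ℕ} {m₀ m₁ m₂ t M₀ : α}

theorem heapTy_after_new (hC : isRuntime C) (hCnil : GCtx.toList C = [])
    (hC'' : isRuntime C'') (hl : l ∉ H.dom) (hheap : HeapTy P (GCtx.comma C C'') H) (m : α) :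
    HeapTy P (GCtx.comma (GCtx.bind (.loc l m)) C'') (H.update l (0, m, P.eps)) := by
  refine hheap.frame hC (isRuntime_bind_loc l m) hC'' (by simp [ldom_eq_empty_of_toList hCnil])
    (by simp) (fun l' h => H.find_update_of_ne _ h) fun hold => ?_
  rw [interpC_focus_comma_of_not_mem hC (by simp [ldom_eq_empty_of_toList hCnil]),
    show H.find l = none by simpa [Heap.dom] using hl] at hold
  rw [Heap.find_update_self, interpC_focus_comma, interpC_focus_join_of_toList rfl]
  exact locTy_after_new hold l m

theorem heapTy_after_op {m t' : α} (hC : isRuntime C) (hCl : GCtx.toList C = [.loc l M₀])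
    (hC'' : isRuntime C'') (hfind : H.find l = some (n, m₀, t)) (ht : P.mul t m = some t')
    (hle : P.mulLe m m₂ M₀) (hheap : HeapTy P (GCtx.comma C C'') H) :
    HeapTy P (GCtx.comma (GCtx.bind (.loc l m₂)) C'') (H.update l (n, m₀, t')) := by
  refine hheap.frame hC (isRuntime_bind_loc l m₂) hC'' (ldom_eq_singleton_of_toList hCl).subset
    (by simp) (fun l' h => H.find_update_of_ne _ h) fun hold => ?_
  rw [interpC_focus_comma, interpC_focus_join_of_toList hCl, hfind] at hold
  rw [Heap.find_update_self, interpC_focus_comma, interpC_focus_join_of_toList rfl]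
  exact locTy_after_op hle ht hold

theorem heapTy_after_drop_succ (hC : isRuntime C) (hCl : GCtx.toList C = [.loc l M₀])
    (hC'' : isRuntime C'') (hfind : H.find l = some (n + 1, m₀, t)) (hle : P.le P.eps M₀)
    (hheap : HeapTy P (GCtx.comma C C'') H) :
    HeapTy P (GCtx.comma GCtx.empty C'') (H.update l (n, m₀, t)) := by
  refine hheap.frame hC isRuntime_empty hC'' (ldom_eq_singleton_of_toList hCl).subset
    (by simp) (fun l' h => H.find_update_of_ne _ h) fun hold => ?_
  rw [interpC_focus_comma, interpC_focus_join_of_toList hCl, hfind] at hold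
  rw [Heap.find_update_self, interpC_focus_comma_empty]
  exact locTy_after_drop_succ hle hold

theorem heapTy_after_drop_zero (hC : isRuntime C) (hCl : GCtx.toList C = [.loc l M₀])
    (hC'' : isRuntime C'') (hfind : H.find l = some (0, m₀, t))
    (hheap : HeapTy P (GCtx.comma C C'') H) :
    HeapTy P (GCtx.comma GCtx.empty C'') (H.erase l) := by
  refine hheap.frame hC isRuntime_empty hC'' (ldom_eq_singleton_of_toList hCl).subset
    (by simp) (fun l' h => H.find_erase_of_ne h) fun hold => ?_
  rw [interpC_focus_comma, interpC_focus_join_of_toList hCl, hfind] at hold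
  rw [Heap.find_erase_self, interpC_focus_comma_empty]
  exact locTy_after_drop_zero hold

theorem heapTy_after_split (hC : isRuntime C) (hCl : GCtx.toList C = [.loc l M₀])
    (hC'' : isRuntime C'') (hfind : H.find l = some (n, m₀, t)) (hle : P.mulLe m₁ m₂ M₀)
    (hheap : HeapTy P (GCtx.comma C C'') H) :
    HeapTy P (GCtx.comma (GCtx.comma (GCtx.bind (.loc l m₁)) (GCtx.bind (.loc l m₂))) C'')
      (H.update l (n + 1, m₀, t)) := by
  refine hheap.frame hC (isRuntime_comma (isRuntime_bind_loc l m₁) (isRuntime_bind_loc l m₂))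
    hC'' (ldom_eq_singleton_of_toList hCl).subset (by simp)
    (fun l' h => H.find_update_of_ne _ h) fun hold => ?_
  rw [interpC_focus_comma, interpC_focus_join_of_toList hCl, hfind] at hold
  rw [Heap.find_update_self, interpC_focus_comma, interpC_focus_comma, Graph.join_assoc,
    interpC_focus_join_of_toList rfl, interpC_focus_join_of_toList rfl]
  exact locTy_after_split hle hold

end HeapTy

/-- **Preservation for configuration reduction.** If `M | ℋ →γ M' | ℋ'`,
`C ⊢ M : T | e`, and `(C , C'') ⊢ ℋ`, then there is a run-time context `C'`
with `(dom C' \ dom C) ∩ dom C'' = ∅`, `C' ⊢ M' : T | e`, and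
`(C' , C'') ⊢ ℋ'`. -/
theorem preservation_gamma {α : Type} (P : OPM α) (C C'' : Ctx α)
    (M M' : Expr α) (H H' : Heap α) (T : Ty α) (e : Bool)
    (hC : isRuntime C) (hC'' : isRuntime C'')
    (hstep : CfgStep P M H M' H')
    (hty : Typing P C M T e)
    (hheap : HeapTy P (GCtx.comma C C'') H) :
    ∃ C' : Ctx α, isRuntime C' ∧
      (ldom C' \ ldom C) ∩ ldom C'' = ∅ ∧
      Typing P C' M' T e ∧
      HeapTy P (GCtx.comma C' C'') H' := by
  cases hstep with
  | new H l m hl =>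
    obtain ⟨_, ⟨⟩, hΓ⟩ := hty.inv_app_const_unit
    rw [hC.ordBindings_eq] at hΓ
    have hlC'' : l ∉ ldom C'' := fun h => hl (hheap.2.1 ▸ by simp [h])
    exact ⟨_, isRuntime_bind_loc l m, by simp [ldom_eq_empty_of_toList hΓ, hlC''],
      (Typing.loc l m).of_effect_false e, heapTy_after_new hC hΓ hC'' hl hheap m⟩
  | op H l n m₀ m t t' hfind ht =>
    obtain ⟨M₀, _, hc, hΓ⟩ := hty.inv_app_const_loc
    rw [hC.ordBindings_eq] at hΓ
    cases hc with
    | op _ _ m₂ hle =>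
      exact ⟨_, isRuntime_bind_loc l m₂, by simp [ldom_eq_singleton_of_toList hΓ],
        (Typing.loc l m₂).of_effect_false e, heapTy_after_op hC hΓ hC'' hfind ht hle hheap⟩
  | cl1 H l n m₀ t hfind =>
    obtain ⟨M₀, _, hc, hΓ⟩ := hty.inv_app_const_loc
    rw [hC.ordBindings_eq] at hΓ
    cases hc with
    | drop _ hle =>
      exact ⟨_, isRuntime_empty, by simp, Typing.unit.of_effect_false e,
        heapTy_after_drop_succ hC hΓ hC'' hfind hle hheap⟩
  | cl2 H l m₀ t hfind =>
    obtain ⟨M₀, _, hc, hΓ⟩ := hty.inv_app_const_loc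
    rw [hC.ordBindings_eq] at hΓ
    cases hc
    exact ⟨_, isRuntime_empty, by simp, Typing.unit.of_effect_false e,
      heapTy_after_drop_zero hC hΓ hC'' hfind hheap⟩
  | sp H l n m₀ t m₁ m₂ hfind =>
    obtain ⟨M₀, _, hc, hΓ⟩ := hty.inv_app_const_loc
    rw [hC.ordBindings_eq] at hΓ
    cases hc with
    | split _ _ _ hle =>
      exact ⟨_, isRuntime_comma (isRuntime_bind_loc l m₁) (isRuntime_bind_loc l m₂),
        by simp [ldom_eq_singleton_of_toList hΓ],
        (Typing.opair _ _ _ _ _ _ _ _ (fun _ => rfl) (.loc l m₁) (.loc l m₂)).of_effect_false e,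
        heapTy_after_split hC hΓ hC'' hfind hle hheap⟩

end LawOrder
end

section
/- Syntactic context equivalence coincides with semantic equivalence (Proposition on graph comparison): for all typing contexts Γ₁ and Γ₂ with interpretations ⟦Γ₁⟧ = 𝔊₁; S₁ and ⟦Γ₂⟧ = 𝔊₂; S₂, one has Γ₁ ≡ Γ₂ if and only if 𝔊₁ ≃ 𝔊₂ and S₁ = S₂. -/
set_option autoImplicit false
set_option linter.unusedVariables false

namespace LawOrder

/-! ## Syntactic equivalence of contexts: the least congruence generated by
    the monoid laws for `,`, the commutative monoid laws for `∥`, and the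
    rules for unrestricted bindings. -/

inductive CtxEquiv {B : Type} (unr : B → Bool) : GCtx B → GCtx B → Prop where
  | commaIdL : ∀ Γ : GCtx B, CtxEquiv unr (GCtx.comma GCtx.empty Γ) Γ
  | commaIdR : ∀ Γ : GCtx B, CtxEquiv unr (GCtx.comma Γ GCtx.empty) Γ
  | commaAssoc : ∀ Γ₁ Γ₂ Γ₃ : GCtx B,
      CtxEquiv unr (GCtx.comma Γ₁ (GCtx.comma Γ₂ Γ₃))
        (GCtx.comma (GCtx.comma Γ₁ Γ₂) Γ₃)
  | parId : ∀ Γ : GCtx B, CtxEquiv unr (GCtx.par GCtx.empty Γ) Γ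
  | parComm : ∀ Γ₁ Γ₂ : GCtx B, CtxEquiv unr (GCtx.par Γ₁ Γ₂) (GCtx.par Γ₂ Γ₁)
  | parAssoc : ∀ Γ₁ Γ₂ Γ₃ : GCtx B,
      CtxEquiv unr (GCtx.par Γ₁ (GCtx.par Γ₂ Γ₃)) (GCtx.par (GCtx.par Γ₁ Γ₂) Γ₃)
  | unrMove : ∀ (G : GPat B) (b : B), unr b = true →
      CtxEquiv unr (GPat.fill G (GCtx.bind b))
        (GCtx.par (GPat.fill G GCtx.empty) (GCtx.bind b))
  | unrDemote : ∀ b : B, unr b = true →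
      CtxEquiv unr (GCtx.par (GCtx.bind b) (GCtx.bind b)) (GCtx.bind b)
  | congr : ∀ (G : GPat B) (Γ₁ Γ₂ : GCtx B), CtxEquiv unr Γ₁ Γ₂ →
      CtxEquiv unr (GPat.fill G Γ₁) (GPat.fill G Γ₂)
  | refl : ∀ Γ : GCtx B, CtxEquiv unr Γ Γ
  | symm : ∀ Γ₁ Γ₂ : GCtx B, CtxEquiv unr Γ₂ Γ₁ → CtxEquiv unr Γ₁ Γ₂
  | trans : ∀ Γ₁ Γ₂ Γ₃ : GCtx B,
      CtxEquiv unr Γ₁ Γ₂ → CtxEquiv unr Γ₂ Γ₃ → CtxEquiv unr Γ₁ Γ₃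


/-!
Replacing the `ℕ`-indexed graph `⟦Γ⟧` by an isomorphic labelled graph `Γ.sem` on a vertex type
built from `Empty`, `Unit` and `⊕` along the syntax of `Γ` turns `,` into the lexicographic sum
and `∥` into the disjoint sum of edge relations; every rule of `≡` is then an isomorphism.

Conversely, unrestricted bindings can be pulled out of any context into a parallel block in
which only their set matters, so it suffices to compare contexts whose leaves are ordered
bindings. If such a `Γ` is isomorphic to `C, D`, the preimage `S` of `C` has an edge from each
of its vertices to each vertex outside it; by induction on `Γ` such a cut is realised
syntactically as `Γ ≡ Γ₁, Γ₂` with `Γ₁ ≃ C` and `Γ₂ ≃ D`, and induction on the second context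
concludes. Cuts crossed by no edge are realised by `∥` in the same way. Finally, a join of two
nonempty graphs is never a union of two nonempty graphs: vertices on different sides are
adjacent in the former and never in the latter, which would force an isomorphism to send every
vertex to the same side.
-/

theorem _root_.forall_or_forall_not_of_subsingleton {α : Type*} [Subsingleton α] (p : α → Prop) :
    (∀ v, p v) ∨ ∀ v, ¬ p v := by
  by_cases h : ∃ v, p v
  · obtain ⟨v, hv⟩ := h
    exact .inl fun w => Subsingleton.elim v w ▸ hv
  · exact .inr (not_exists.mp h)

section Sum

variable {α β : Type*}

theorem _root_.Sum.lex_of_isLeft_of_not_isLeft {r : α → α → Prop} {s : β → β → Prop} {x y : α ⊕ β}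
    (hx : x.isLeft) (hy : ¬ y.isLeft) : Sum.Lex r s x y := by
  rcases x with x | x <;> rcases y with y | y <;> simp_all [Sum.Lex.sep]

theorem _root_.Sum.lex_or_lex_of_isLeft_ne {r : α → α → Prop} {s : β → β → Prop} {x y : α ⊕ β}
    (h : x.isLeft ≠ y.isLeft) : Sum.Lex r s x y ∨ Sum.Lex r s y x := by
  rcases x with x | x <;> rcases y with y | y <;> simp_all

theorem _root_.Sum.forall_or_forall_not_of_isLeft_eq [Nonempty α] [Nonempty β] {p : α ⊕ β → Prop}
    (h : ∀ x y, p x → ¬ p y → x.isLeft = y.isLeft) : (∀ v, p v) ∨ ∀ v, ¬ p v := by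
  by_contra! ⟨⟨y, hy⟩, ⟨x, hx⟩⟩
  have side : ∀ z : α ⊕ β, z.isLeft = x.isLeft := fun z => by
    by_cases hz : p z
    · exact (h z y hz hy).trans (h x y hx hy).symm
    · exact (h x z hx hz).symm
  obtain ⟨a⟩ := ‹Nonempty α›
  obtain ⟨b⟩ := ‹Nonempty β›
  exact Bool.false_ne_true ((side (.inr b)).trans (side (.inl a)).symm)

end Sum

/-! ### Labelled graphs on arbitrary vertex types -/

structure LabeledGraph (B : Type) where
  V : Type
  adj : V → V → Prop
  label : V → B

namespace LabeledGraph

variable {B : Type} {G H K G' H' : LabeledGraph B}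

abbrev empty (B : Type) : LabeledGraph B := ⟨Empty, fun _ _ => False, Empty.elim⟩

abbrev single (b : B) : LabeledGraph B := ⟨Unit, fun _ _ => False, fun _ => b⟩

abbrev join (G H : LabeledGraph B) : LabeledGraph B :=
  ⟨G.V ⊕ H.V, Sum.Lex G.adj H.adj, Sum.elim G.label H.label⟩

abbrev union (G H : LabeledGraph B) : LabeledGraph B :=
  ⟨G.V ⊕ H.V, Sum.LiftRel G.adj H.adj, Sum.elim G.label H.label⟩

abbrev induce (G : LabeledGraph B) (p : G.V → Prop) : LabeledGraph B :=
  ⟨Subtype p, Subrel G.adj p, fun v => G.label v⟩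

theorem union_adj_isLeft_eq {x y : (G.union H).V} (h : (G.union H).adj x y) :
    x.isLeft = y.isLeft :=
  Bool.eq_iff_iff.mpr h.isLeft_congr

structure Iso (G H : LabeledGraph B) extends G.adj ≃r H.adj where
  map_label : ∀ v, H.label (toRelIso v) = G.label v

namespace Iso

instance : EquivLike (G.Iso H) G.V H.V where
  coe e := e.toRelIso
  inv e := e.toRelIso.symm
  left_inv e := e.toRelIso.left_inv
  right_inv e := e.toRelIso.right_inv
  coe_injective' e₁ e₂ h₁ h₂ := by
    obtain ⟨⟨⟨_, _, _, _⟩, _⟩, _⟩ := e₁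
    obtain ⟨⟨⟨_, _, _, _⟩, _⟩, _⟩ := e₂
    congr

theorem map_adj (e : G.Iso H) {x y : G.V} : H.adj (e x) (e y) ↔ G.adj x y :=
  e.toRelIso.map_rel_iff

def refl (G : LabeledGraph B) : G.Iso G := ⟨RelIso.refl _, fun _ => rfl⟩

def symm (e : G.Iso H) : H.Iso G :=
  ⟨e.toRelIso.symm, fun v => by rw [← e.map_label, RelIso.apply_symm_apply]⟩

def trans (e₁ : G.Iso H) (e₂ : H.Iso K) : G.Iso K :=
  ⟨e₁.toRelIso.trans e₂.toRelIso, fun v => (e₂.map_label _).trans (e₁.map_label v)⟩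

theorem apply_symm_apply (e : G.Iso H) (v : H.V) : e (e.symm v) = v :=
  e.toRelIso.apply_symm_apply v

def ofIsEmpty [IsEmpty G.V] [IsEmpty H.V] : G.Iso H :=
  ⟨RelIso.relIsoOfIsEmpty _ _, isEmptyElim⟩

def joinCongr (e₁ : G.Iso G') (e₂ : H.Iso H') : (G.join H).Iso (G'.join H') :=
  ⟨RelIso.sumLexCongr e₁.toRelIso e₂.toRelIso, by
    rintro (v | v)
    exacts [e₁.map_label v, e₂.map_label v]⟩

def unionCongr (e₁ : G.Iso G') (e₂ : H.Iso H') : (G.union H).Iso (G'.union H') :=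
  ⟨⟨Equiv.sumCongr e₁.toEquiv e₂.toEquiv, by
    rintro (x | x) (y | y) <;> simp [RelIso.map_rel_iff]⟩, by
    rintro (v | v)
    exacts [e₁.map_label v, e₂.map_label v]⟩

def joinAssoc (G H K : LabeledGraph B) : ((G.join H).join K).Iso (G.join (H.join K)) :=
  ⟨⟨Equiv.sumAssoc _ _ _, by rintro ((x | x) | x) ((y | y) | y) <;> simp⟩, by
    rintro ((v | v) | v) <;> rfl⟩

def unionAssoc (G H K : LabeledGraph B) : ((G.union H).union K).Iso (G.union (H.union K)) :=
  ⟨⟨Equiv.sumAssoc _ _ _, by rintro ((x | x) | x) ((y | y) | y) <;> simp⟩, by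
    rintro ((v | v) | v) <;> rfl⟩

def unionComm (G H : LabeledGraph B) : (G.union H).Iso (H.union G) :=
  ⟨⟨Equiv.sumComm _ _, by rintro (x | x) (y | y) <;> simp⟩, by rintro (v | v) <;> rfl⟩

def emptyJoin [IsEmpty G.V] (H : LabeledGraph B) : (G.join H).Iso H :=
  ⟨RelIso.emptySumLex _ _, by rintro (v | v); exacts [isEmptyElim v, rfl]⟩

def joinEmpty [IsEmpty H.V] (G : LabeledGraph B) : (G.join H).Iso G :=
  ⟨RelIso.sumLexEmpty _ _, by rintro (v | v); exacts [rfl, isEmptyElim v]⟩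

def unionEmpty [IsEmpty H.V] (G : LabeledGraph B) : (G.union H).Iso G :=
  ⟨⟨Equiv.sumEmpty _ _, by
    rintro (x | x) (y | y)
    · simp
    all_goals exact isEmptyElim ‹H.V›⟩, by
    rintro (v | v); exacts [rfl, isEmptyElim v]⟩

def emptyUnion [IsEmpty G.V] (H : LabeledGraph B) : (G.union H).Iso H :=
  (unionComm G H).trans (unionEmpty H)

def induceUniv {p : G.V → Prop} (hp : ∀ v, p v) : (G.induce p).Iso G :=
  ⟨⟨Equiv.subtypeUnivEquiv hp, Iff.rfl⟩, fun _ => rfl⟩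

def induceComap (e : G.Iso H) (p : H.V → Prop) : (G.induce (p ∘ e)).Iso (H.induce p) :=
  ⟨⟨e.toEquiv.subtypeEquiv fun _ => Iff.rfl, e.map_adj⟩, fun v => e.map_label v⟩

def induceJoin (p : (G.join H).V → Prop) :
    ((G.join H).induce p).Iso
      ((G.induce fun v => p (.inl v)).join (H.induce fun v => p (.inr v))) :=
  ⟨⟨Equiv.subtypeSum, by rintro ⟨x | x, hx⟩ ⟨y | y, hy⟩ <;> simp [Equiv.subtypeSum]⟩, by
    rintro ⟨v | v, hv⟩ <;> rfl⟩

def induceUnion (p : (G.union H).V → Prop) :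
    ((G.union H).induce p).Iso
      ((G.induce fun v => p (.inl v)).union (H.induce fun v => p (.inr v))) :=
  ⟨⟨Equiv.subtypeSum, by rintro ⟨x | x, hx⟩ ⟨y | y, hy⟩ <;> simp [Equiv.subtypeSum]⟩, by
    rintro ⟨v | v, hv⟩ <;> rfl⟩

def induceIsLeftJoin : ((G.join H).induce (·.isLeft)).Iso G :=
  ⟨⟨Equiv.sumIsLeft, by rintro ⟨x | x, hx⟩ ⟨y | y, hy⟩ <;> simp at hx hy ⊢⟩, by
    rintro ⟨x | x, hx⟩ <;> simp at hx ⊢⟩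

def induceNotIsLeftJoin : ((G.join H).induce (¬ ·.isLeft)).Iso H :=
  ⟨⟨(Equiv.subtypeEquivRight fun _ => Sum.not_isLeft).trans Equiv.sumIsRight, by
    rintro ⟨x | x, hx⟩ ⟨y | y, hy⟩ <;> simp at hx hy ⊢⟩, by rintro ⟨x | x, hx⟩ <;> simp at hx ⊢⟩

def induceIsLeftUnion : ((G.union H).induce (·.isLeft)).Iso G :=
  ⟨⟨Equiv.sumIsLeft, by rintro ⟨x | x, hx⟩ ⟨y | y, hy⟩ <;> simp at hx hy ⊢⟩, by
    rintro ⟨x | x, hx⟩ <;> simp at hx ⊢⟩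

def induceNotIsLeftUnion : ((G.union H).induce (¬ ·.isLeft)).Iso H :=
  ⟨⟨(Equiv.subtypeEquivRight fun _ => Sum.not_isLeft).trans Equiv.sumIsRight, by
    rintro ⟨x | x, hx⟩ ⟨y | y, hy⟩ <;> simp at hx hy ⊢⟩, by rintro ⟨x | x, hx⟩ <;> simp at hx ⊢⟩

end Iso

theorem not_nonempty_iso_join_union [Nonempty G.V] [Nonempty H.V] [Nonempty G'.V]
    [Nonempty H'.V] : ¬ Nonempty ((G.join H).Iso (G'.union H')) := by
  rintro ⟨e⟩
  have h : ∀ x y, (e x).isLeft → ¬ (e y).isLeft → x.isLeft = y.isLeft := by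
    intro x y hx hy
    by_contra hxy
    have hexy : (e x).isLeft ≠ (e y).isLeft := fun h => hy (h ▸ hx)
    rcases Sum.lex_or_lex_of_isLeft_ne hxy with h | h
    · exact hexy (union_adj_isLeft_eq (e.map_adj.mpr h))
    · exact hexy (union_adj_isLeft_eq (e.map_adj.mpr h)).symm
  rcases Sum.forall_or_forall_not_of_isLeft_eq h with hl | hr
  · obtain ⟨d⟩ := ‹Nonempty H'.V›
    have := hl (e.symm (.inr d))
    rw [Iso.apply_symm_apply] at this
    exact Bool.false_ne_true this
  · obtain ⟨c⟩ := ‹Nonempty G'.V›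
    have := hr (e.symm (.inl c))
    rw [Iso.apply_symm_apply] at this
    exact this rfl

end LabeledGraph

open LabeledGraph (Iso)

namespace Graph

variable {B : Type}

abbrev toLabeled (G : Graph B) : LabeledGraph B :=
  ⟨Fin G.n, fun i j => G.edge i j, fun i => G.label i⟩

/-- The bijection in `Graph.Iso` goes from the vertices of `G₂` to those of `G₁`. -/
theorem iso_iff_nonempty_iso {G₁ G₂ : Graph B} :
    G₁.Iso G₂ ↔ Nonempty (G₂.toLabeled.Iso G₁.toLabeled) := by
  constructor
  · rintro ⟨hn, f, hf, hedge, hlabel⟩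
    let e : Fin G₂.n ≃ Fin G₁.n := (finCongr hn.symm).trans (Equiv.ofBijective f hf)
    exact ⟨⟨⟨e, fun {i j} => hedge _ _⟩, fun i => hlabel _⟩⟩
  · rintro ⟨e⟩
    have hn : G₁.n = G₂.n := (Fin.equiv_iff_eq.mp ⟨e.toEquiv⟩).symm
    exact ⟨hn, fun i => e (finCongr hn i), e.bijective.comp (finCongr hn).bijective,
      fun i j => e.map_adj, fun i => e.map_label _⟩

variable (G₁ G₂ : Graph B)

theorem join_edge_finSumFinEquiv (a b : Fin G₁.n ⊕ Fin G₂.n) :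
    (G₁.join G₂).edge (finSumFinEquiv a) (finSumFinEquiv b) ↔
      (G₁.toLabeled.join G₂.toLabeled).adj a b := by
  rcases a with i | i <;> rcases b with j | j <;> simp [join]
  all_goals exact fun h => by have := G₁.edge_lt _ _ h; omega

theorem union_edge_finSumFinEquiv (a b : Fin G₁.n ⊕ Fin G₂.n) :
    (G₁.union G₂).edge (finSumFinEquiv a) (finSumFinEquiv b) ↔
      (G₁.toLabeled.union G₂.toLabeled).adj a b := by
  rcases a with i | i <;> rcases b with j | j <;> simp [union]
  all_goals exact fun h => by have := G₁.edge_lt _ _ h; omega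

theorem join_label_finSumFinEquiv (a : Fin G₁.n ⊕ Fin G₂.n) :
    (G₁.join G₂).label (finSumFinEquiv a) = (G₁.toLabeled.join G₂.toLabeled).label a := by
  rcases a with i | i <;> simp [join]

theorem union_label_finSumFinEquiv (a : Fin G₁.n ⊕ Fin G₂.n) :
    (G₁.union G₂).label (finSumFinEquiv a) = (G₁.toLabeled.union G₂.toLabeled).label a := by
  rcases a with i | i <;> simp [union]

def joinIso : (G₁.toLabeled.join G₂.toLabeled).Iso (G₁.join G₂).toLabeled :=
  ⟨⟨finSumFinEquiv, join_edge_finSumFinEquiv G₁ G₂ _ _⟩, join_label_finSumFinEquiv G₁ G₂⟩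

def unionIso : (G₁.toLabeled.union G₂.toLabeled).Iso (G₁.union G₂).toLabeled :=
  ⟨⟨finSumFinEquiv, union_edge_finSumFinEquiv G₁ G₂ _ _⟩, union_label_finSumFinEquiv G₁ G₂⟩

def zeroIso [Inhabited B] : (Graph.zero B).toLabeled.Iso (.empty B) :=
  have : IsEmpty (Graph.zero B).toLabeled.V := inferInstanceAs (IsEmpty (Fin 0))
  .ofIsEmpty

end Graph

/-! ### Contexts as labelled graphs -/

namespace GCtx

variable {B : Type} (unr : B → Bool)

def sem : GCtx B → LabeledGraph B
  | .empty => .empty B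
  | .bind b => if unr b then .empty B else .single b
  | .comma Γ₁ Γ₂ => (sem Γ₁).join (sem Γ₂)
  | .par Γ₁ Γ₂ => (sem Γ₁).union (sem Γ₂)

def AllOrdered : GCtx B → Prop
  | .empty => False
  | .bind b => unr b = false
  | .comma A C => A.AllOrdered ∧ C.AllOrdered
  | .par A C => A.AllOrdered ∧ C.AllOrdered

variable {unr}

theorem sem_bind_of_unr {b : B} (h : unr b = true) : (bind b).sem unr = .empty B := if_pos h

theorem sem_bind_of_ordered {b : B} (h : unr b = false) : (bind b).sem unr = .single b :=
  if_neg (by simp [h])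

instance : IsEmpty (GCtx.empty.sem unr).V := inferInstanceAs (IsEmpty Empty)

instance (b : B) : Subsingleton ((bind b).sem unr).V := by
  unfold sem; split <;> infer_instance

theorem isEmpty_sem_bind {b : B} (h : unr b = true) : IsEmpty ((bind b).sem unr).V := by
  rw [sem_bind_of_unr h]; infer_instance

theorem AllOrdered.nonempty_sem {Γ : GCtx B} (h : Γ.AllOrdered unr) : Nonempty (Γ.sem unr).V := by
  induction Γ with
  | empty => exact h.elim
  | bind b => rw [sem_bind_of_ordered h]; exact ⟨()⟩
  | comma A C ihA _ | par A C ihA _ => exact (ihA h.1).map .inl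

theorem AllOrdered.eq_bind_of_subsingleton {Γ : GCtx B} (h : Γ.AllOrdered unr)
    [Subsingleton (Γ.sem unr).V] : ∃ b, Γ = .bind b := by
  cases Γ with
  | empty => exact h.elim
  | bind b => exact ⟨b, rfl⟩
  | comma A C | par A C =>
    obtain ⟨a⟩ := h.1.nonempty_sem
    obtain ⟨c⟩ := h.2.nonempty_sem
    exact (Sum.inl_ne_inr (‹Subsingleton _›.allEq (Sum.inl a) (Sum.inr c))).elim

theorem nonempty_interpG_iso_sem [Inhabited B] (Γ : GCtx B) :
    Nonempty ((Γ.interpG unr).toLabeled.Iso (Γ.sem unr)) := by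
  induction Γ with
  | empty => exact ⟨Graph.zeroIso⟩
  | bind b =>
    cases h : unr b
    · simp only [interpG, h, sem_bind_of_ordered h, Bool.false_eq_true, if_false]
      exact ⟨⟨⟨Equiv.ofUnique (Fin 1) Unit, Iff.rfl⟩, fun _ => rfl⟩⟩
    · simp only [interpG, h, sem_bind_of_unr h, if_true]
      exact ⟨Graph.zeroIso⟩
  | comma A C ihA ihC =>
    obtain ⟨eA⟩ := ihA
    obtain ⟨eC⟩ := ihC
    exact ⟨(Graph.joinIso _ _).symm.trans (eA.joinCongr eC)⟩
  | par A C ihA ihC =>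
    obtain ⟨eA⟩ := ihA
    obtain ⟨eC⟩ := ihC
    exact ⟨(Graph.unionIso _ _).symm.trans (eA.unionCongr eC)⟩

theorem iso_interpG_iff [Inhabited B] {Γ₁ Γ₂ : GCtx B} :
    (Γ₁.interpG unr).Iso (Γ₂.interpG unr) ↔ Nonempty ((Γ₁.sem unr).Iso (Γ₂.sem unr)) := by
  obtain ⟨e₁⟩ := nonempty_interpG_iso_sem (unr := unr) Γ₁
  obtain ⟨e₂⟩ := nonempty_interpG_iso_sem (unr := unr) Γ₂
  rw [Graph.iso_iff_nonempty_iso]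
  exact ⟨fun ⟨e⟩ => ⟨(e₁.symm.trans e.symm).trans e₂⟩,
    fun ⟨e⟩ => ⟨(e₂.trans e.symm).trans e₁.symm⟩⟩

end GCtx

def GPat.semCongr {B : Type} {unr : B → Bool} {Γ₁ Γ₂ : GCtx B} (P : GPat B)
    (e : (Γ₁.sem unr).Iso (Γ₂.sem unr)) : ((P.fill Γ₁).sem unr).Iso ((P.fill Γ₂).sem unr) :=
  match P with
  | .hole => e
  | .commaL P _ => (P.semCongr e).joinCongr (.refl _)
  | .commaR _ P => (Iso.refl _).joinCongr (P.semCongr e)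
  | .parL P _ => (P.semCongr e).unionCongr (.refl _)
  | .parR _ P => (Iso.refl _).unionCongr (P.semCongr e)

theorem GPat.unrSet_fill {B : Type} {unr : B → Bool} (P : GPat B) (Γ : GCtx B) :
    (P.fill Γ).unrSet unr = (P.fill .empty).unrSet unr ∪ Γ.unrSet unr := by
  induction P with
  | hole => simp [GPat.fill, GCtx.unrSet]
  | commaL P Δ ih | commaR Δ P ih | parL P Δ ih | parR Δ P ih =>
    simp only [GPat.fill, GCtx.unrSet, ih]
    tauto_set

def GPat.comp {B : Type} : GPat B → GPat B → GPat B
  | .hole, Q => Q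
  | .commaL P Δ, Q => .commaL (P.comp Q) Δ
  | .commaR Δ P, Q => .commaR Δ (P.comp Q)
  | .parL P Δ, Q => .parL (P.comp Q) Δ
  | .parR Δ P, Q => .parR Δ (P.comp Q)

theorem GPat.fill_comp {B : Type} (P Q : GPat B) (Γ : GCtx B) :
    (P.comp Q).fill Γ = P.fill (Q.fill Γ) := by
  induction P with
  | hole => rfl
  | commaL P Δ ih | commaR Δ P ih | parL P Δ ih | parR Δ P ih => simp only [comp, fill, ih]

section Equivalence

variable {B : Type} {unr : B → Bool} {Γ₁ Γ₂ A A' C C' : GCtx B}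

local infix:50 " ≣ " => CtxEquiv unr

instance : IsTrans (GCtx B) (CtxEquiv unr) := ⟨CtxEquiv.trans⟩

namespace CtxEquiv

theorem comma_congr (hA : A ≣ A') (hC : C ≣ C') : .comma A C ≣ .comma A' C' :=
  (congr (.commaL .hole C) _ _ hA).trans _ _ _ (congr (.commaR A' .hole) _ _ hC)

theorem par_congr (hA : A ≣ A') (hC : C ≣ C') : .par A C ≣ .par A' C' :=
  (congr (.parL .hole C) _ _ hA).trans _ _ _ (congr (.parR A' .hole) _ _ hC)

theorem par_congr_left (hA : A ≣ A') : .par A C ≣ .par A' C := par_congr hA (refl C)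

theorem par_congr_right (hC : C ≣ C') : .par A C ≣ .par A C' := par_congr (refl A) hC

theorem par_empty (Γ : GCtx B) : .par Γ .empty ≣ Γ := (parComm _ _).trans _ _ _ (parId Γ)

theorem par_left_comm (A C D : GCtx B) : .par A (.par C D) ≣ .par C (.par A D) := calc
  _ ≣ .par (.par A C) D := parAssoc _ _ _
  _ ≣ .par (.par C A) D := par_congr_left (parComm _ _)
  _ ≣ .par C (.par A D) := (parAssoc _ _ _).symm

theorem par_par_comm (A A' C C' : GCtx B) :
    .par (.par A A') (.par C C') ≣ .par (.par A C) (.par A' C') := calc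
  _ ≣ .par A (.par A' (.par C C')) := (parAssoc _ _ _).symm
  _ ≣ .par A (.par C (.par A' C')) := par_congr_right (par_left_comm _ _ _)
  _ ≣ .par (.par A C) (.par A' C') := parAssoc _ _ _

theorem unrSet_eq (h : Γ₁ ≣ Γ₂) : Γ₁.unrSet unr = Γ₂.unrSet unr := by
  induction h with
  | unrMove P b hb => rw [GPat.unrSet_fill]; rfl
  | congr P Γ₁ Γ₂ _ ih => rw [GPat.unrSet_fill P Γ₁, GPat.unrSet_fill P Γ₂, ih]
  | symm _ _ _ ih => exact ih.symm
  | trans _ _ _ _ _ ih₁ ih₂ => exact ih₁.trans ih₂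
  | _ => simp only [GCtx.unrSet] <;> tauto_set

theorem nonempty_semIso (h : Γ₁ ≣ Γ₂) : Nonempty ((Γ₁.sem unr).Iso (Γ₂.sem unr)) := by
  induction h with
  | commaIdL Γ => exact ⟨Iso.emptyJoin _⟩
  | commaIdR Γ => exact ⟨Iso.joinEmpty _⟩
  | commaAssoc Γ₁ Γ₂ Γ₃ => exact ⟨(Iso.joinAssoc _ _ _).symm⟩
  | parId Γ => exact ⟨Iso.emptyUnion _⟩
  | parComm Γ₁ Γ₂ => exact ⟨Iso.unionComm _ _⟩
  | parAssoc Γ₁ Γ₂ Γ₃ => exact ⟨(Iso.unionAssoc _ _ _).symm⟩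
  | unrMove P b hb =>
    have := GCtx.isEmpty_sem_bind hb
    exact ⟨(P.semCongr .ofIsEmpty).trans (Iso.unionEmpty _).symm⟩
  | unrDemote b hb =>
    have := GCtx.isEmpty_sem_bind hb
    exact ⟨Iso.unionEmpty _⟩
  | congr P Γ₁ Γ₂ _ ih => exact ih.map P.semCongr
  | refl Γ => exact ⟨.refl _⟩
  | symm _ _ _ ih => exact ih.map Iso.symm
  | trans _ _ _ _ _ ih₁ ih₂ => exact ⟨ih₁.some.trans ih₂.some⟩

end CtxEquiv

end Equivalence

/-! ### Completeness for contexts without unrestricted bindings -/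

section Completeness

variable {B : Type} {unr : B → Bool} {Γ Γ₁ Γ₂ : GCtx B}

local infix:50 " ≣ " => CtxEquiv unr

open CtxEquiv (comma_congr par_congr par_empty par_par_comm)
open LabeledGraph (union_adj_isLeft_eq not_nonempty_iso_join_union)

theorem exists_allOrdered_of_unrSet_eq_empty (h : Γ.unrSet unr = ∅) :
    Γ ≣ .empty ∨ ∃ Γ', Γ'.AllOrdered unr ∧ Γ ≣ Γ' := by
  induction Γ with
  | empty => exact .inl (.refl _)
  | bind b =>
    cases hb : unr b
    · exact .inr ⟨.bind b, hb, .refl _⟩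
    · simp [GCtx.unrSet, hb] at h
  | comma A C ihA ihC =>
    obtain ⟨hA, hC⟩ := Set.union_empty_iff.mp h
    rcases ihA hA with hA | ⟨A', hA', eA⟩ <;> rcases ihC hC with hC | ⟨C', hC', eC⟩
    · exact .inl ((comma_congr hA hC).trans _ _ _ (.commaIdL _))
    · exact .inr ⟨C', hC', (comma_congr hA eC).trans _ _ _ (.commaIdL _)⟩
    · exact .inr ⟨A', hA', (comma_congr eA hC).trans _ _ _ (.commaIdR _)⟩
    · exact .inr ⟨.comma A' C', ⟨hA', hC'⟩, comma_congr eA eC⟩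
  | par A C ihA ihC =>
    obtain ⟨hA, hC⟩ := Set.union_empty_iff.mp h
    rcases ihA hA with hA | ⟨A', hA', eA⟩ <;> rcases ihC hC with hC | ⟨C', hC', eC⟩
    · exact .inl ((par_congr hA hC).trans _ _ _ (.parId _))
    · exact .inr ⟨C', hC', (par_congr hA eC).trans _ _ _ (.parId _)⟩
    · exact .inr ⟨A', hA', (par_congr eA hC).trans _ _ _ (par_empty _)⟩
    · exact .inr ⟨.par A' C', ⟨hA', hC'⟩, par_congr eA eC⟩

theorem exists_allOrdered_of_iso (h₂ : Γ₂.AllOrdered unr) (h₁ : Γ₁.unrSet unr = ∅)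
    (e : (Γ₁.sem unr).Iso (Γ₂.sem unr)) :
    ∃ Γ, Γ.AllOrdered unr ∧ Γ₁ ≣ Γ ∧ Nonempty ((Γ.sem unr).Iso (Γ₂.sem unr)) := by
  rcases exists_allOrdered_of_unrSet_eq_empty h₁ with h | ⟨Γ, hΓ, h⟩
  · obtain ⟨f⟩ := h.nonempty_semIso
    obtain ⟨v⟩ := h₂.nonempty_sem
    exact isEmptyElim (f (e.symm v))
  · obtain ⟨f⟩ := h.nonempty_semIso
    exact ⟨Γ, hΓ, h, ⟨f.symm.trans e⟩⟩

theorem unrSet_eq_empty_of_equiv {op : GCtx B → GCtx B → GCtx B}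
    (hop : ∀ A C, (op A C).unrSet unr = A.unrSet unr ∪ C.unrSet unr) {A C : GCtx B}
    (hΓ : Γ.unrSet unr = ∅) (h : Γ ≣ op A C) : A.unrSet unr = ∅ ∧ C.unrSet unr = ∅ := by
  rw [h.unrSet_eq, hop] at hΓ
  exact Set.union_empty_iff.mp hΓ

def SplitsAs (op : GCtx B → GCtx B → GCtx B) (Γ : GCtx B) (p : (Γ.sem unr).V → Prop) : Prop :=
  ∃ Γ₁ Γ₂, Γ ≣ op Γ₁ Γ₂ ∧ Nonempty ((Γ₁.sem unr).Iso ((Γ.sem unr).induce p)) ∧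
    Nonempty ((Γ₂.sem unr).Iso ((Γ.sem unr).induce (¬ p ·)))

theorem splitsAs_of_forall_or_forall_not {op : GCtx B → GCtx B → GCtx B}
    (hl : Γ ≣ op .empty Γ) (hr : Γ ≣ op Γ .empty) {p : (Γ.sem unr).V → Prop}
    (hp : (∀ v, p v) ∨ ∀ v, ¬ p v) : SplitsAs op Γ p := by
  rcases hp with hp | hp
  · have : IsEmpty ((Γ.sem unr).induce (¬ p ·)).V := ⟨fun v => v.2 (hp v)⟩
    exact ⟨Γ, .empty, hr, ⟨(Iso.induceUniv hp).symm⟩, ⟨.ofIsEmpty⟩⟩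
  · have : IsEmpty ((Γ.sem unr).induce p).V := ⟨fun v => hp v v.2⟩
    exact ⟨.empty, Γ, hl, ⟨.ofIsEmpty⟩, ⟨(Iso.induceUniv hp).symm⟩⟩

theorem splitsAs_comma_of_joinCut (hΓ : Γ.AllOrdered unr) (p : (Γ.sem unr).V → Prop)
    (hp : ∀ x y, p x → ¬ p y → (Γ.sem unr).adj x y) : SplitsAs .comma Γ p := by
  induction Γ with
  | empty => exact hΓ.elim
  | bind b =>
    exact splitsAs_of_forall_or_forall_not (.symm _ _ (.commaIdL _)) (.symm _ _ (.commaIdR _))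
      (forall_or_forall_not_of_subsingleton p)
  | comma A C ihA ihC =>
    by_cases hC : ∃ c, p (.inr c)
    · obtain ⟨c, hc⟩ := hC
      -- no edge leads from `C` back to `A`, so all of `A` lies in `p`
      have hA : ∀ a, p (.inl a) := fun a => by_contra fun ha => Sum.lex_inr_inl (hp _ _ hc ha)
      obtain ⟨C₁, C₂, hCeq, ⟨e₁⟩, ⟨e₂⟩⟩ :=
        ihC hΓ.2 (fun c => p (.inr c)) fun x y hx hy => Sum.lex_inr_inr.mp (hp _ _ hx hy)
      have : IsEmpty ((A.sem unr).induce fun a => ¬ p (.inl a)).V := ⟨fun a => a.2 (hA a)⟩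
      refine ⟨.comma A C₁, C₂, (comma_congr (.refl A) hCeq).trans _ _ _ (.commaAssoc _ _ _),
        ⟨?_⟩, ⟨?_⟩⟩
      · exact ((Iso.induceUniv hA).symm.joinCongr e₁).trans (Iso.induceJoin p).symm
      · exact (e₂.trans (Iso.emptyJoin _).symm).trans (Iso.induceJoin (¬ p ·)).symm
    · push Not at hC
      obtain ⟨A₁, A₂, hAeq, ⟨e₁⟩, ⟨e₂⟩⟩ :=
        ihA hΓ.1 (fun a => p (.inl a)) fun x y hx hy => Sum.lex_inl_inl.mp (hp _ _ hx hy)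
      have : IsEmpty ((C.sem unr).induce fun c => p (.inr c)).V := ⟨fun c => hC c c.2⟩
      refine ⟨A₁, .comma A₂ C,
        (comma_congr hAeq (.refl C)).trans _ _ _ (.symm _ _ (.commaAssoc _ _ _)), ⟨?_⟩, ⟨?_⟩⟩
      · exact (e₁.trans (Iso.joinEmpty _).symm).trans (Iso.induceJoin p).symm
      · exact (e₂.joinCongr (Iso.induceUniv hC).symm).trans (Iso.induceJoin (¬ p ·)).symm
  | par A C =>
    refine splitsAs_of_forall_or_forall_not (.symm _ _ (.commaIdL _)) (.symm _ _ (.commaIdR _)) ?_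
    have := hΓ.1.nonempty_sem
    have := hΓ.2.nonempty_sem
    exact Sum.forall_or_forall_not_of_isLeft_eq fun x y hx hy => union_adj_isLeft_eq (hp x y hx hy)

theorem splitsAs_par_of_unionCut (hΓ : Γ.AllOrdered unr) (p : (Γ.sem unr).V → Prop)
    (hp : ∀ x y, p x → ¬ p y → ¬ (Γ.sem unr).adj x y ∧ ¬ (Γ.sem unr).adj y x) :
    SplitsAs .par Γ p := by
  induction Γ with
  | empty => exact hΓ.elim
  | bind b =>
    exact splitsAs_of_forall_or_forall_not (.symm _ _ (.parId _)) (.symm _ _ (par_empty _))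
      (forall_or_forall_not_of_subsingleton p)
  | comma A C =>
    refine splitsAs_of_forall_or_forall_not (.symm _ _ (.parId _)) (.symm _ _ (par_empty _)) ?_
    have := hΓ.1.nonempty_sem
    have := hΓ.2.nonempty_sem
    refine Sum.forall_or_forall_not_of_isLeft_eq fun x y hx hy => ?_
    by_contra hxy
    rcases Sum.lex_or_lex_of_isLeft_ne hxy with h | h
    exacts [(hp x y hx hy).1 h, (hp x y hx hy).2 h]
  | par A C ihA ihC =>
    obtain ⟨A₁, A₂, hAeq, ⟨eA₁⟩, ⟨eA₂⟩⟩ := ihA hΓ.1 (fun a => p (.inl a)) fun x y hx hy =>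
      (hp _ _ hx hy).imp (fun h h' => h (.inl h')) (fun h h' => h (.inl h'))
    obtain ⟨C₁, C₂, hCeq, ⟨eC₁⟩, ⟨eC₂⟩⟩ := ihC hΓ.2 (fun c => p (.inr c)) fun x y hx hy =>
      (hp _ _ hx hy).imp (fun h h' => h (.inr h')) (fun h h' => h (.inr h'))
    exact ⟨.par A₁ C₁, .par A₂ C₂, (par_congr hAeq hCeq).trans _ _ _ (par_par_comm _ _ _ _),
      ⟨(eA₁.unionCongr eC₁).trans (Iso.induceUnion p).symm⟩,
      ⟨(eA₂.unionCongr eC₂).trans (Iso.induceUnion (¬ p ·)).symm⟩⟩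

theorem CtxEquiv.comma_of_iso {C D : GCtx B}
    (hC : ∀ {Γ}, Γ.unrSet unr = ∅ → (Γ.sem unr).Iso (C.sem unr) → Γ ≣ C)
    (hD : ∀ {Γ}, Γ.unrSet unr = ∅ → (Γ.sem unr).Iso (D.sem unr) → Γ ≣ D)
    (hCD : (GCtx.comma C D).AllOrdered unr) (h₁ : Γ₁.unrSet unr = ∅)
    (e : (Γ₁.sem unr).Iso ((GCtx.comma C D).sem unr)) : Γ₁ ≣ .comma C D := by
  obtain ⟨Γ, hΓ, hΓ₁, ⟨e⟩⟩ := exists_allOrdered_of_iso hCD h₁ e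
  refine hΓ₁.trans _ _ _ ?_
  cases Γ with
  | empty => exact hΓ.elim
  | bind b =>
    have := e.symm.toEquiv.subsingleton
    obtain ⟨_, h⟩ := hCD.eq_bind_of_subsingleton
    cases h
  | par A A' =>
    have := hΓ.1.nonempty_sem; have := hΓ.2.nonempty_sem
    have := hCD.1.nonempty_sem; have := hCD.2.nonempty_sem
    exact (not_nonempty_iso_join_union ⟨e.symm⟩).elim
  | comma A A' =>
    obtain ⟨Γa, Γb, hsplit, ⟨ea⟩, ⟨eb⟩⟩ := splitsAs_comma_of_joinCut hΓ (fun x => (e x).isLeft)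
      fun x y hx hy => e.map_adj.mp (Sum.lex_of_isLeft_of_not_isLeft hx hy)
    obtain ⟨ha, hb⟩ := unrSet_eq_empty_of_equiv (fun _ _ => rfl) h₁ (hΓ₁.trans _ _ _ hsplit)
    exact hsplit.trans _ _ _ (comma_congr
      (hC ha (ea.trans ((e.induceComap _).trans .induceIsLeftJoin)))
      (hD hb (eb.trans ((e.induceComap _).trans .induceNotIsLeftJoin))))

theorem CtxEquiv.par_of_iso {C D : GCtx B}
    (hC : ∀ {Γ}, Γ.unrSet unr = ∅ → (Γ.sem unr).Iso (C.sem unr) → Γ ≣ C)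
    (hD : ∀ {Γ}, Γ.unrSet unr = ∅ → (Γ.sem unr).Iso (D.sem unr) → Γ ≣ D)
    (hCD : (GCtx.par C D).AllOrdered unr) (h₁ : Γ₁.unrSet unr = ∅)
    (e : (Γ₁.sem unr).Iso ((GCtx.par C D).sem unr)) : Γ₁ ≣ .par C D := by
  obtain ⟨Γ, hΓ, hΓ₁, ⟨e⟩⟩ := exists_allOrdered_of_iso hCD h₁ e
  refine hΓ₁.trans _ _ _ ?_
  cases Γ with
  | empty => exact hΓ.elim
  | bind b =>
    have := e.symm.toEquiv.subsingleton
    obtain ⟨_, h⟩ := hCD.eq_bind_of_subsingleton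
    cases h
  | comma A A' =>
    have := hΓ.1.nonempty_sem; have := hΓ.2.nonempty_sem
    have := hCD.1.nonempty_sem; have := hCD.2.nonempty_sem
    exact (not_nonempty_iso_join_union ⟨e⟩).elim
  | par A A' =>
    obtain ⟨Γa, Γb, hsplit, ⟨ea⟩, ⟨eb⟩⟩ := splitsAs_par_of_unionCut hΓ (fun x => (e x).isLeft)
      fun x y hx hy =>
        have hxy : (e x).isLeft ≠ (e y).isLeft := fun h => hy (h ▸ hx)
        ⟨fun h => hxy (union_adj_isLeft_eq (e.map_adj.mpr h)),
          fun h => hxy (union_adj_isLeft_eq (e.map_adj.mpr h)).symm⟩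
    obtain ⟨ha, hb⟩ := unrSet_eq_empty_of_equiv (fun _ _ => rfl) h₁ (hΓ₁.trans _ _ _ hsplit)
    exact hsplit.trans _ _ _ (par_congr
      (hC ha (ea.trans ((e.induceComap _).trans .induceIsLeftUnion)))
      (hD hb (eb.trans ((e.induceComap _).trans .induceNotIsLeftUnion))))

theorem CtxEquiv.bind_of_iso {b : B} (hb : unr b = false) (h₁ : Γ₁.unrSet unr = ∅)
    (e : (Γ₁.sem unr).Iso ((GCtx.bind b).sem unr)) : Γ₁ ≣ .bind b := by
  obtain ⟨Γ, hΓ, hΓ₁, ⟨e⟩⟩ := exists_allOrdered_of_iso (Γ₂ := .bind b) hb h₁ e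
  have := e.toEquiv.subsingleton
  obtain ⟨b', rfl⟩ := hΓ.eq_bind_of_subsingleton
  rw [GCtx.sem_bind_of_ordered hΓ, GCtx.sem_bind_of_ordered hb] at e
  obtain rfl : b = b' := e.map_label ()
  exact hΓ₁

theorem CtxEquiv.of_iso_of_allOrdered (h₂ : Γ₂.AllOrdered unr) (h₁ : Γ₁.unrSet unr = ∅)
    (e : (Γ₁.sem unr).Iso (Γ₂.sem unr)) : Γ₁ ≣ Γ₂ := by
  induction Γ₂ generalizing Γ₁ with
  | empty => exact h₂.elim
  | bind b => exact bind_of_iso h₂ h₁ e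
  | comma C D ihC ihD => exact comma_of_iso (ihC h₂.1) (ihD h₂.2) h₂ h₁ e
  | par C D ihC ihD => exact par_of_iso (ihC h₂.1) (ihD h₂.2) h₂ h₁ e

theorem CtxEquiv.of_iso_of_unrSet_eq_empty (h₁ : Γ₁.unrSet unr = ∅) (h₂ : Γ₂.unrSet unr = ∅)
    (e : (Γ₁.sem unr).Iso (Γ₂.sem unr)) : Γ₁ ≣ Γ₂ := by
  rcases exists_allOrdered_of_unrSet_eq_empty h₁ with h | ⟨Γ, hΓ, h⟩
  · rcases exists_allOrdered_of_unrSet_eq_empty h₂ with h' | ⟨Γ', hΓ', h'⟩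
    · exact h.trans _ _ _ h'.symm
    · obtain ⟨f⟩ := h'.nonempty_semIso
      exact (of_iso_of_allOrdered hΓ' h₁ (e.trans f)).trans _ _ _ h'.symm
  · obtain ⟨f⟩ := h.nonempty_semIso
    exact h.trans _ _ _ (of_iso_of_allOrdered hΓ h₂ (e.symm.trans f)).symm

end Completeness

/-! ### Separating the unrestricted bindings -/

namespace GCtx

variable {B : Type} (unr : B → Bool)

def eraseUnr : GCtx B → GCtx B
  | .empty => .empty
  | .bind b => if unr b then .empty else .bind b
  | .comma A C => .comma A.eraseUnr C.eraseUnr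
  | .par A C => .par A.eraseUnr C.eraseUnr

def unrList : GCtx B → List B
  | .empty => []
  | .bind b => if unr b then [b] else []
  | .comma A C => A.unrList ++ C.unrList
  | .par A C => A.unrList ++ C.unrList

def parList : List B → GCtx B
  | [] => .empty
  | b :: l => .par (.bind b) (parList l)

variable {unr}

theorem sem_eraseUnr (Γ : GCtx B) : (Γ.eraseUnr unr).sem unr = Γ.sem unr := by
  induction Γ with
  | empty => rfl
  | bind b => cases h : unr b <;> simp [eraseUnr, sem, h]
  | comma A C ihA ihC | par A C ihA ihC => simp only [eraseUnr, sem, ihA, ihC]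

theorem unrSet_eraseUnr (Γ : GCtx B) : (Γ.eraseUnr unr).unrSet unr = ∅ := by
  induction Γ with
  | empty => rfl
  | bind b => cases h : unr b <;> simp [eraseUnr, unrSet, h]
  | comma A C ihA ihC | par A C ihA ihC =>
    simp only [eraseUnr, unrSet, ihA, ihC, Set.union_self]

theorem mem_unrList {Γ : GCtx B} {b : B} : b ∈ Γ.unrList unr ↔ b ∈ Γ.unrSet unr := by
  induction Γ with
  | empty => simp [unrList, unrSet]
  | bind c => cases h : unr c <;> simp [unrList, unrSet, h]
  | comma A C ihA ihC | par A C ihA ihC =>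
    simp only [unrList, unrSet, List.mem_append, ihA, ihC, Set.mem_union]

theorem unr_of_mem_unrSet {Γ : GCtx B} {b : B} (h : b ∈ Γ.unrSet unr) : unr b = true := by
  induction Γ with
  | empty => exact h.elim
  | bind c => by_cases hc : unr c <;> simp_all [unrSet]
  | comma A C ihA ihC | par A C ihA ihC => exact h.elim ihA ihC

end GCtx

section Unrestricted

variable {B : Type} {unr : B → Bool} {Γ₁ Γ₂ : GCtx B}

local infix:50 " ≣ " => CtxEquiv unr

open CtxEquiv (par_congr par_congr_left par_congr_right par_empty par_left_comm)
open GCtx (parList)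

theorem parList_append (l₁ l₂ : List B) :
    parList (l₁ ++ l₂) ≣ .par (parList l₁) (parList l₂) := by
  induction l₁ with
  | nil => exact .symm _ _ (.parId _)
  | cons b l ih => exact (par_congr_right ih).trans _ _ _ (.parAssoc _ _ _)

theorem par_parList_par_parList (Γ : GCtx B) (l₁ l₂ : List B) :
    .par (.par Γ (parList l₂)) (parList l₁) ≣ .par Γ (parList (l₁ ++ l₂)) :=
  (CtxEquiv.parAssoc _ _ _).symm.trans _ _ _
    (par_congr_right ((CtxEquiv.parComm _ _).trans _ _ _ (parList_append _ _).symm))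

theorem fill_equiv_par_eraseUnr (Γ : GCtx B) (P : GPat B) :
    P.fill Γ ≣ .par (P.fill (Γ.eraseUnr unr)) (parList (Γ.unrList unr)) := by
  induction Γ generalizing P with
  | empty => exact (par_empty _).symm
  | bind b =>
    cases hb : unr b
    · simpa [GCtx.eraseUnr, GCtx.unrList, parList, hb] using (par_empty _).symm
    · simpa [GCtx.eraseUnr, GCtx.unrList, parList, hb] using
        (CtxEquiv.unrMove P b hb).trans _ _ _ (par_congr_right (par_empty _).symm)
  | comma A C ihA ihC =>
    have hA := ihA (P.comp (.commaL .hole C))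
    have hC := ihC (P.comp (.commaR (A.eraseUnr unr) .hole))
    simp only [GPat.fill_comp, GPat.fill] at hA hC
    exact (hA.trans _ _ _ (par_congr_left hC)).trans _ _ _ (par_parList_par_parList _ _ _)
  | par A C ihA ihC =>
    have hA := ihA (P.comp (.parL .hole C))
    have hC := ihC (P.comp (.parR (A.eraseUnr unr) .hole))
    simp only [GPat.fill_comp, GPat.fill] at hA hC
    exact (hA.trans _ _ _ (par_congr_left hC)).trans _ _ _ (par_parList_par_parList _ _ _)

theorem par_bind_parList {b : B} (hb : unr b = true) {l : List B} (h : b ∈ l) :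
    .par (.bind b) (parList l) ≣ parList l := by
  induction l with
  | nil => exact absurd h List.not_mem_nil
  | cons c l ih =>
    rcases List.mem_cons.mp h with rfl | h
    · exact (CtxEquiv.parAssoc _ _ _).trans _ _ _ (par_congr_left (.unrDemote b hb))
    · exact (par_left_comm _ _ _).trans _ _ _ (par_congr_right (ih h))

theorem par_parList_of_subset {l₁ l₂ : List B} (hl₁ : ∀ b ∈ l₁, unr b = true) (h : l₁ ⊆ l₂) :
    .par (parList l₁) (parList l₂) ≣ parList l₂ := by
  induction l₁ with
  | nil => exact .parId _
  | cons b l ih =>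
    have hl : .par (parList l) (parList l₂) ≣ parList l₂ :=
      ih (fun c hc => hl₁ c (List.mem_cons_of_mem b hc)) (List.subset_of_cons_subset h)
    exact (CtxEquiv.parAssoc _ _ _).symm.trans _ _ _ ((par_congr_right hl).trans _ _ _
      (par_bind_parList (hl₁ b List.mem_cons_self) (h List.mem_cons_self)))

theorem parList_unrList_equiv (h : Γ₁.unrSet unr = Γ₂.unrSet unr) :
    parList (Γ₁.unrList unr) ≣ parList (Γ₂.unrList unr) := by
  have hunr : ∀ {Γ : GCtx B}, ∀ b ∈ Γ.unrList unr, unr b = true :=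
    fun _ hb => GCtx.unr_of_mem_unrSet (GCtx.mem_unrList.mp hb)
  have h₁₂ : Γ₁.unrList unr ⊆ Γ₂.unrList unr :=
    fun _ hb => GCtx.mem_unrList.mpr (h ▸ GCtx.mem_unrList.mp hb)
  have h₂₁ : Γ₂.unrList unr ⊆ Γ₁.unrList unr :=
    fun _ hb => GCtx.mem_unrList.mpr (h.symm ▸ GCtx.mem_unrList.mp hb)
  exact (par_parList_of_subset hunr h₂₁).symm.trans _ _ _
    ((CtxEquiv.parComm _ _).trans _ _ _ (par_parList_of_subset hunr h₁₂))

theorem eraseUnr_equiv_of_iso (e : (Γ₁.sem unr).Iso (Γ₂.sem unr)) :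
    Γ₁.eraseUnr unr ≣ Γ₂.eraseUnr unr :=
  .of_iso_of_unrSet_eq_empty (GCtx.unrSet_eraseUnr Γ₁) (GCtx.unrSet_eraseUnr Γ₂)
    (by rw [GCtx.sem_eraseUnr, GCtx.sem_eraseUnr]; exact e)

end Unrestricted

/-- **Syntactic context equivalence coincides with semantic equivalence.**
`Γ₁ ≡ Γ₂` holds if and only if the graph parts of the interpretations are
isomorphic and the sets of unrestricted bindings are equal. -/
theorem ctx_equiv_iff_interp {B : Type} [Inhabited B] (unr : B → Bool)
    (Γ₁ Γ₂ : GCtx B) :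
    CtxEquiv unr Γ₁ Γ₂ ↔
      (Graph.Iso (GCtx.interpG unr Γ₁) (GCtx.interpG unr Γ₂) ∧
        GCtx.unrSet unr Γ₁ = GCtx.unrSet unr Γ₂) := by
  rw [GCtx.iso_interpG_iff]
  refine ⟨fun h => ⟨h.nonempty_semIso, h.unrSet_eq⟩, fun ⟨⟨e⟩, hset⟩ => ?_⟩
  calc CtxEquiv unr Γ₁ (.par (Γ₁.eraseUnr unr) (GCtx.parList (Γ₁.unrList unr))) :=
        fill_equiv_par_eraseUnr Γ₁ .hole
    CtxEquiv unr _ (.par (Γ₂.eraseUnr unr) (GCtx.parList (Γ₂.unrList unr))) :=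
        CtxEquiv.par_congr (eraseUnr_equiv_of_iso e) (parList_unrList_equiv hset)
    CtxEquiv unr _ Γ₂ := (fill_equiv_par_eraseUnr Γ₂ .hole).symm

end LawOrder
end

section
/- Correctness of realization: for every typing context Γ containing no unrestricted bindings, the realization ⌜⟦Γ⟧⌝ of its graph interpretation is defined and ⌜⟦Γ⟧⌝ ≡ Γ. -/
set_option autoImplicit false
set_option linter.unusedVariables false

namespace LawOrder

/-! ## Realization of a graph representation as a context (defined by
    recursion on the number of vertices, splitting at the minimum union cut
    or the minimum join cut). -/

open Classical in
noncomputable def Graph.realize {B : Type} (G : Graph B) : Option (GCtx B) :=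
  if G.n = 0 then some GCtx.empty
  else if G.n = 1 then some (GCtx.bind (G.label 0))
  else if hu : ∃ k, G.UnionCut k then
    (Graph.realize (G.cutLo (sInf {k | G.UnionCut k}))).bind fun Γ₁ =>
      (Graph.realize (G.cutHi (sInf {k | G.UnionCut k}))).map fun Γ₂ =>
        GCtx.par Γ₁ Γ₂
  else if hj : ∃ k, G.JoinCut k then
    (Graph.realize (G.cutLo (sInf {k | G.JoinCut k}))).bind fun Γ₁ =>
      (Graph.realize (G.cutHi (sInf {k | G.JoinCut k}))).map fun Γ₂ =>
        GCtx.comma Γ₁ Γ₂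
  else none
termination_by G.n
decreasing_by
  · have h := Nat.sInf_mem (s := {k | G.UnionCut k}) hu
    simp only [Set.mem_setOf_eq] at h
    obtain ⟨h1, h2, -⟩ := h
    simpa only [Graph.cutLo] using h2
  · have h := Nat.sInf_mem (s := {k | G.UnionCut k}) hu
    simp only [Set.mem_setOf_eq] at h
    obtain ⟨h1, h2, -⟩ := h
    simp only [Graph.cutHi]
    omega
  · have h := Nat.sInf_mem (s := {k | G.JoinCut k}) hj
    simp only [Set.mem_setOf_eq] at h
    obtain ⟨h1, h2, -⟩ := h
    simpa only [Graph.cutLo] using h2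
  · have h := Nat.sInf_mem (s := {k | G.JoinCut k}) hj
    simp only [Set.mem_setOf_eq] at h
    obtain ⟨h1, h2, -⟩ := h
    simp only [Graph.cutHi]
    omega

/-! An ordered context with at least two bindings interprets to a graph with a union or a join
cut, and every union (join) cut `k` of `⟦Γ⟧` comes from a syntactic splitting `Γ ≡ Γ₁ ∥ Γ₂`
(`Γ ≡ Γ₁, Γ₂`) whose parts interpret the two sides of the index cut at `k`: descend into `Γ`
along the cut, reassociating, and drop subcontexts without bindings. This holds in particular
for the minimum cut chosen by the realization, so induction on the number of vertices closes the
argument. The sides of a cut of `⟦Γ⟧` are only extensionally equal to interpretations, so the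
induction runs over all graph representations extensionally equal to some `⟦Γ⟧`. -/

namespace Graph

variable {B : Type} {G G' H H' K : Graph B} {k : ℕ}

@[simp] lemma n_union (G H : Graph B) : (G.union H).n = G.n + H.n := rfl

@[simp] lemma n_join (G H : Graph B) : (G.join H).n = G.n + H.n := rfl

@[simp] lemma n_cutHi (G : Graph B) (k : ℕ) : (G.cutHi k).n = G.n - k := rfl

/-- Labels beyond the last vertex are junk, so representations are compared extensionally. -/
structure ExtEq (G H : Graph B) : Prop where
  n_eq : G.n = H.n
  label_eq : ∀ i < G.n, G.label i = H.label i
  edge_iff : ∀ i j, G.edge i j ↔ H.edge i j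

namespace ExtEq

lemma refl (G : Graph B) : ExtEq G G := ⟨rfl, fun _ _ => rfl, fun _ _ => Iff.rfl⟩

lemma trans (h : ExtEq G H) (h' : ExtEq H K) : ExtEq G K :=
  ⟨h.n_eq.trans h'.n_eq, fun i hi => (h.label_eq i hi).trans (h'.label_eq i (h.n_eq ▸ hi)),
    fun i j => (h.edge_iff i j).trans (h'.edge_iff i j)⟩

lemma unionCut_iff (h : ExtEq G H) : G.UnionCut k ↔ H.UnionCut k := by
  simp only [UnionCut, h.n_eq, h.edge_iff]

lemma joinCut_iff (h : ExtEq G H) : G.JoinCut k ↔ H.JoinCut k := by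
  simp only [JoinCut, h.n_eq, h.edge_iff]

lemma cutLo (h : ExtEq G H) (hk : k ≤ G.n) : ExtEq (G.cutLo k) (H.cutLo k) :=
  ⟨rfl, fun i hi => h.label_eq i (lt_of_lt_of_le hi hk), fun i j => by
    simp only [Graph.cutLo, h.edge_iff]⟩

lemma cutHi (h : ExtEq G H) : ExtEq (G.cutHi k) (H.cutHi k) :=
  ⟨by simp [h.n_eq], fun i hi => h.label_eq _ (by rw [n_cutHi] at hi; omega),
    fun i j => by simp only [Graph.cutHi, h.edge_iff]⟩

lemma union (hG : ExtEq G G') (hH : ExtEq H H') : ExtEq (G.union H) (G'.union H') := by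
  refine ⟨by simp [Graph.union, hG.n_eq, hH.n_eq], fun i hi => ?_, fun i j => ?_⟩
  · have := hG.label_eq; have := hH.label_eq; have := hG.n_eq
    simp only [Graph.union] at hi ⊢; grind
  · simp only [Graph.union, hG.n_eq, hG.edge_iff, hH.edge_iff]

lemma join (hG : ExtEq G G') (hH : ExtEq H H') : ExtEq (G.join H) (G'.join H') := by
  refine ⟨by simp [Graph.join, hG.n_eq, hH.n_eq], fun i hi => ?_, fun i j => ?_⟩
  · have := hG.label_eq; have := hH.label_eq; have := hG.n_eq
    simp only [Graph.join] at hi ⊢; grind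
  · simp only [Graph.join, hG.n_eq, hH.n_eq, hG.edge_iff, hH.edge_iff]

end ExtEq

lemma join_of_n_eq_zero_left (h : G.n = 0) : ExtEq (G.join H) H := by
  refine ⟨by simp [h], fun i hi => by simp [join, h], fun i j => ?_⟩
  have := G.edge_lt i j
  simp only [join, h]; grind

lemma join_of_n_eq_zero_right (h : H.n = 0) : ExtEq (G.join H) G := by
  refine ⟨by simp [h], fun i hi => by simp [join, h] at hi ⊢; grind, fun i j => ?_⟩
  have := H.edge_lt (i - G.n) (j - G.n)
  simp only [join, h]; grind

lemma union_of_n_eq_zero_left (h : G.n = 0) : ExtEq (G.union H) H := by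
  refine ⟨by simp [h], fun i hi => by simp [union, h], fun i j => ?_⟩
  have := G.edge_lt i j
  simp only [union, h]; grind

lemma union_of_n_eq_zero_right (h : H.n = 0) : ExtEq (G.union H) G := by
  refine ⟨by simp [h], fun i hi => by simp [union, h] at hi ⊢; grind, fun i j => ?_⟩
  have := H.edge_lt (i - G.n) (j - G.n)
  simp only [union, h]; grind

lemma cutLo_n (G : Graph B) : ExtEq (G.cutLo G.n) G :=
  ⟨rfl, fun _ _ => rfl, fun i j => by have := G.edge_lt i j; simp only [cutLo]; grind⟩

lemma cutHi_zero (G : Graph B) : ExtEq (G.cutHi 0) G :=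
  ⟨by simp, fun _ _ => rfl, fun _ _ => Iff.rfl⟩

lemma cutLo_union_left (hk : k ≤ G.n) : ExtEq ((G.union H).cutLo k) (G.cutLo k) := by
  refine ⟨rfl, fun i hi => ?_, fun i j => ?_⟩
  · simp only [cutLo, union] at hi ⊢; grind
  · simp only [cutLo, union]; grind

lemma cutHi_union_left (hk : k ≤ G.n) :
    ExtEq ((G.union H).cutHi k) ((G.cutHi k).union H) := by
  refine ⟨by simp; omega, fun i hi => ?_, fun i j => ?_⟩
  · simp only [cutHi, union] at hi ⊢; grind
  · simp only [cutHi, union]; grind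

lemma cutLo_union_right (h₁ : G.n ≤ k) (h₂ : k ≤ G.n + H.n) :
    ExtEq ((G.union H).cutLo k) (G.union (H.cutLo (k - G.n))) := by
  refine ⟨by simp only [cutLo, union]; omega, fun i hi => rfl, fun i j => ?_⟩
  have := G.edge_lt i j
  simp only [cutLo, union]; grind

lemma cutHi_union_right (h : G.n ≤ k) :
    ExtEq ((G.union H).cutHi k) (H.cutHi (k - G.n)) := by
  refine ⟨by simp; omega, fun i hi => ?_, fun i j => ?_⟩
  · simp only [cutHi, union] at hi ⊢; grind
  · have := G.edge_lt (i + k) (j + k)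
    simp only [cutHi, union]; grind

lemma cutLo_join_left (hk : k ≤ G.n) : ExtEq ((G.join H).cutLo k) (G.cutLo k) := by
  refine ⟨rfl, fun i hi => ?_, fun i j => ?_⟩
  · simp only [cutLo, join] at hi ⊢; grind
  · simp only [cutLo, join]; grind

lemma cutHi_join_left (hk : k ≤ G.n) :
    ExtEq ((G.join H).cutHi k) ((G.cutHi k).join H) := by
  refine ⟨by simp; omega, fun i hi => ?_, fun i j => ?_⟩
  · simp only [cutHi, join] at hi ⊢; grind
  · simp only [cutHi, join]; grind

lemma cutLo_join_right (h₁ : G.n ≤ k) (h₂ : k ≤ G.n + H.n) :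
    ExtEq ((G.join H).cutLo k) (G.join (H.cutLo (k - G.n))) := by
  refine ⟨by simp only [cutLo, join]; omega, fun i hi => rfl, fun i j => ?_⟩
  have := G.edge_lt i j
  simp only [cutLo, join]; grind

lemma cutHi_join_right (h : G.n ≤ k) :
    ExtEq ((G.join H).cutHi k) (H.cutHi (k - G.n)) := by
  refine ⟨by simp; omega, fun i hi => ?_, fun i j => ?_⟩
  · simp only [cutHi, join] at hi ⊢; grind
  · have := G.edge_lt (i + k) (j + k)
    simp only [cutHi, join]; grind

lemma UnionCut.two_le (h : G.UnionCut k) : 2 ≤ G.n := by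
  have := h.1; have := h.2.1; omega

lemma JoinCut.two_le (h : G.JoinCut k) : 2 ≤ G.n := by
  have := h.1; have := h.2.1; omega

lemma unionCut_union (hG : 0 < G.n) (hH : 0 < H.n) : (G.union H).UnionCut G.n := by
  refine ⟨hG, by simp; omega, fun i j hi hj he => ?_⟩
  have := G.edge_lt i j
  simp only [union] at he; grind

lemma joinCut_join (hG : 0 < G.n) (hH : 0 < H.n) : (G.join H).JoinCut G.n :=
  ⟨hG, by simp; omega, fun i j hi hj hjn => by simp only [join] at hjn ⊢; grind⟩

lemma UnionCut.of_union_left (h : (G.union H).UnionCut k) (hk : k < G.n) : G.UnionCut k :=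
  ⟨h.1, hk, fun i j hi hj he => h.2.2 i j hi hj (Or.inl he)⟩

lemma UnionCut.of_union_right (h : (G.union H).UnionCut k) (hk : G.n < k) :
    H.UnionCut (k - G.n) := by
  obtain ⟨-, hkn, hcut⟩ := h
  simp only [n_union] at hkn
  refine ⟨by omega, by omega, fun i j hi hj he => hcut (i + G.n) (j + G.n) (by omega) (by omega) ?_⟩
  exact Or.inr ⟨by omega, by omega, by simpa using he⟩

lemma JoinCut.of_join_left (h : (G.join H).JoinCut k) (hk : k < G.n) : G.JoinCut k := by
  refine ⟨h.1, hk, fun i j hi hj hjn => ?_⟩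
  have he := h.2.2 i j hi hj (by simp; omega)
  simp only [join] at he; grind

lemma JoinCut.of_join_right (h : (G.join H).JoinCut k) (hk : G.n < k) :
    H.JoinCut (k - G.n) := by
  obtain ⟨-, hkn, hcut⟩ := h
  simp only [n_join] at hkn
  refine ⟨by omega, by omega, fun i j hi hj hjn => ?_⟩
  have he := hcut (i + G.n) (j + G.n) (by omega) (by omega) (by simp; omega)
  have := G.edge_lt (i + G.n) (j + G.n)
  simp only [join] at he; grind

lemma UnionCut.n_eq_zero_of_join (h : (G.join H).UnionCut k) : G.n = 0 ∨ H.n = 0 := by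
  obtain ⟨hk, hkn, hcut⟩ := h
  simp only [n_join] at hkn
  by_contra! hGH
  by_cases hkG : k ≤ G.n
  · exact hcut (k - 1) G.n (by omega) hkG (by simp only [join]; omega)
  · exact hcut 0 k hk le_rfl (by simp only [join]; omega)

lemma JoinCut.n_eq_zero_of_union (h : (G.union H).JoinCut k) : G.n = 0 ∨ H.n = 0 := by
  obtain ⟨hk, hkn, hcut⟩ := h
  simp only [n_union] at hkn
  by_contra! hGH
  by_cases hkG : k ≤ G.n
  · have he := hcut (k - 1) (G.n + H.n - 1) (by omega) (by omega) (by simp; omega)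
    have := G.edge_lt (k - 1) (G.n + H.n - 1)
    simp only [union] at he; grind
  · have he := hcut 0 k (by omega) (by omega) (by simp; omega)
    have := G.edge_lt 0 k
    simp only [union] at he; grind

def HasCut (G : Graph B) : Prop := (∃ k, G.UnionCut k) ∨ ∃ k, G.JoinCut k

lemma ExtEq.hasCut_iff (h : ExtEq G H) : G.HasCut ↔ H.HasCut := by
  simp only [HasCut, h.unionCut_iff, h.joinCut_iff]

end Graph

namespace CtxEquiv

variable {B : Type} {unr : B → Bool} {Γ Γ₁ Γ₂ Δ₁ Δ₂ : GCtx B}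

lemma comma_congr_s11 (h₁ : CtxEquiv unr Γ₁ Δ₁) (h₂ : CtxEquiv unr Γ₂ Δ₂) :
    CtxEquiv unr (.comma Γ₁ Γ₂) (.comma Δ₁ Δ₂) :=
  trans _ _ _ (congr (.commaL .hole Γ₂) _ _ h₁) (congr (.commaR Δ₁ .hole) _ _ h₂)

lemma par_congr_s11 (h₁ : CtxEquiv unr Γ₁ Δ₁) (h₂ : CtxEquiv unr Γ₂ Δ₂) :
    CtxEquiv unr (.par Γ₁ Γ₂) (.par Δ₁ Δ₂) :=
  trans _ _ _ (congr (.parL .hole Γ₂) _ _ h₁) (congr (.parR Δ₁ .hole) _ _ h₂)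

lemma parIdR (Γ : GCtx B) : CtxEquiv unr (.par Γ .empty) Γ :=
  trans _ _ _ (parComm _ _) (parId _)

lemma empty_of_toList_eq_nil (h : Γ.toList = []) : CtxEquiv unr Γ .empty := by
  induction Γ with
  | empty => exact refl _
  | bind b => simp [GCtx.toList] at h
  | comma Γ₁ Γ₂ ih₁ ih₂ =>
    simp only [GCtx.toList, List.append_eq_nil_iff] at h
    exact trans _ _ _ (comma_congr_s11 (ih₁ h.1) (ih₂ h.2)) (commaIdL _)
  | par Γ₁ Γ₂ ih₁ ih₂ =>
    simp only [GCtx.toList, List.append_eq_nil_iff] at h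
    exact trans _ _ _ (par_congr_s11 (ih₁ h.1) (ih₂ h.2)) (parId _)

lemma comma_of_toList_eq_nil_left (h : Γ₁.toList = []) : CtxEquiv unr (.comma Γ₁ Γ₂) Γ₂ :=
  trans _ _ _ (comma_congr_s11 (empty_of_toList_eq_nil h) (refl _)) (commaIdL _)

lemma comma_of_toList_eq_nil_right (h : Γ₂.toList = []) : CtxEquiv unr (.comma Γ₁ Γ₂) Γ₁ :=
  trans _ _ _ (comma_congr_s11 (refl _) (empty_of_toList_eq_nil h)) (commaIdR _)

lemma par_of_toList_eq_nil_left (h : Γ₁.toList = []) : CtxEquiv unr (.par Γ₁ Γ₂) Γ₂ :=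
  trans _ _ _ (par_congr_s11 (empty_of_toList_eq_nil h) (refl _)) (parId _)

lemma par_of_toList_eq_nil_right (h : Γ₂.toList = []) : CtxEquiv unr (.par Γ₁ Γ₂) Γ₁ :=
  trans _ _ _ (par_congr_s11 (refl _) (empty_of_toList_eq_nil h)) (parIdR _)

lemma bind_of_toList_eq_singleton {b : B} (h : Γ.toList = [b]) : CtxEquiv unr Γ (.bind b) := by
  induction Γ with
  | empty => simp [GCtx.toList] at h
  | bind b' => simp only [GCtx.toList, List.cons.injEq, and_true] at h; exact h ▸ refl _
  | comma Γ₁ Γ₂ ih₁ ih₂ =>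
    rcases List.append_eq_singleton_iff.mp h with ⟨h₁, h₂⟩ | ⟨h₁, h₂⟩
    · exact trans _ _ _ (comma_of_toList_eq_nil_left h₁) (ih₂ h₂)
    · exact trans _ _ _ (comma_of_toList_eq_nil_right h₂) (ih₁ h₁)
  | par Γ₁ Γ₂ ih₁ ih₂ =>
    rcases List.append_eq_singleton_iff.mp h with ⟨h₁, h₂⟩ | ⟨h₁, h₂⟩
    · exact trans _ _ _ (par_of_toList_eq_nil_left h₁) (ih₂ h₂)
    · exact trans _ _ _ (par_of_toList_eq_nil_right h₂) (ih₁ h₁)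

end CtxEquiv

namespace GCtx

open LawOrder.Graph

variable {B : Type} {unr : B → Bool} {Γ Γ' Γ₁ Γ₂ A C : GCtx B} {k : ℕ}

def Ordered (unr : B → Bool) (Γ : GCtx B) : Prop := ∀ b ∈ Γ.toList, unr b = false

lemma ordered_comma : (comma Γ₁ Γ₂).Ordered unr ↔ Γ₁.Ordered unr ∧ Γ₂.Ordered unr := by
  simp only [Ordered, toList, List.mem_append, or_imp, forall_and]

lemma ordered_par : (par Γ₁ Γ₂).Ordered unr ↔ Γ₁.Ordered unr ∧ Γ₂.Ordered unr :=
  ordered_comma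

variable [Inhabited B]

lemma n_interpG (hΓ : Γ.Ordered unr) : (Γ.interpG unr).n = Γ.toList.length := by
  induction Γ with
  | empty => rfl
  | bind b => simp [interpG, hΓ b (List.mem_singleton_self b), toList]
  | comma Γ₁ Γ₂ ih₁ ih₂ =>
    obtain ⟨h₁, h₂⟩ := ordered_comma.mp hΓ
    simp [interpG, toList, ih₁ h₁, ih₂ h₂]
  | par Γ₁ Γ₂ ih₁ ih₂ =>
    obtain ⟨h₁, h₂⟩ := ordered_par.mp hΓ
    simp [interpG, toList, ih₁ h₁, ih₂ h₂]

lemma toList_eq_nil_of_n_interpG_eq_zero (hΓ : Γ.Ordered unr) (h : (Γ.interpG unr).n = 0) :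
    Γ.toList = [] :=
  List.length_eq_zero_iff.mp (n_interpG hΓ ▸ h)

lemma label_interpG (hΓ : Γ.Ordered unr) {i : ℕ} (hi : i < (Γ.interpG unr).n) :
    (Γ.interpG unr).label i = Γ.toList.getD i default := by
  induction Γ generalizing i with
  | empty => simp [interpG, Graph.zero] at hi
  | bind b =>
    simp only [interpG, hΓ b (List.mem_singleton_self b)] at hi ⊢
    simp_all [toList]
  | comma Γ₁ Γ₂ ih₁ ih₂ =>
    obtain ⟨h₁, h₂⟩ := ordered_comma.mp hΓ
    have := n_interpG h₁
    simp only [interpG, Graph.join, toList] at hi ⊢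
    split_ifs with hlt
    · rw [ih₁ h₁ hlt, List.getD_append _ _ _ _ (by omega)]
    · rw [ih₂ h₂ (by omega), List.getD_append_right _ _ _ _ (by omega), this]
  | par Γ₁ Γ₂ ih₁ ih₂ =>
    obtain ⟨h₁, h₂⟩ := ordered_par.mp hΓ
    have := n_interpG h₁
    simp only [interpG, Graph.union, toList] at hi ⊢
    split_ifs with hlt
    · rw [ih₁ h₁ hlt, List.getD_append _ _ _ _ (by omega)]
    · rw [ih₂ h₂ (by omega), List.getD_append_right _ _ _ _ (by omega), this]

lemma hasCut_interpG (hΓ : Γ.Ordered unr) (hn : 2 ≤ (Γ.interpG unr).n) :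
    (Γ.interpG unr).HasCut := by
  induction Γ with
  | empty | bind b => simp [n_interpG hΓ, toList] at hn
  | comma Γ₁ Γ₂ ih₁ ih₂ =>
    obtain ⟨h₁, h₂⟩ := ordered_comma.mp hΓ
    simp only [interpG, n_join] at hn ⊢
    rcases Nat.eq_zero_or_pos (Γ₁.interpG unr).n with z₁ | p₁
    · exact (join_of_n_eq_zero_left z₁).hasCut_iff.mpr (ih₂ h₂ (by omega))
    rcases Nat.eq_zero_or_pos (Γ₂.interpG unr).n with z₂ | p₂
    · exact (join_of_n_eq_zero_right z₂).hasCut_iff.mpr (ih₁ h₁ (by omega))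
    exact .inr ⟨_, joinCut_join p₁ p₂⟩
  | par Γ₁ Γ₂ ih₁ ih₂ =>
    obtain ⟨h₁, h₂⟩ := ordered_par.mp hΓ
    simp only [interpG, n_union] at hn ⊢
    rcases Nat.eq_zero_or_pos (Γ₁.interpG unr).n with z₁ | p₁
    · exact (union_of_n_eq_zero_left z₁).hasCut_iff.mpr (ih₂ h₂ (by omega))
    rcases Nat.eq_zero_or_pos (Γ₂.interpG unr).n with z₂ | p₂
    · exact (union_of_n_eq_zero_right z₂).hasCut_iff.mpr (ih₁ h₁ (by omega))
    exact .inl ⟨_, unionCut_union p₁ p₂⟩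

structure IsSplit (unr : B → Bool) (op : GCtx B → GCtx B → GCtx B) (Γ : GCtx B) (k : ℕ)
    (Γ₁ Γ₂ : GCtx B) : Prop where
  equiv : CtxEquiv unr Γ (op Γ₁ Γ₂)
  ordered_left : Γ₁.Ordered unr
  ordered_right : Γ₂.Ordered unr
  cutLo : ExtEq ((Γ.interpG unr).cutLo k) (Γ₁.interpG unr)
  cutHi : ExtEq ((Γ.interpG unr).cutHi k) (Γ₂.interpG unr)

namespace IsSplit

variable {op : GCtx B → GCtx B → GCtx B}

lemma of_equiv (hs : IsSplit unr op Γ' k A C) (hΓ : CtxEquiv unr Γ Γ')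
    (hG : ExtEq (Γ.interpG unr) (Γ'.interpG unr)) (hk : k ≤ (Γ.interpG unr).n) :
    IsSplit unr op Γ k A C :=
  ⟨.trans _ _ _ hΓ hs.equiv, hs.ordered_left, hs.ordered_right, (hG.cutLo hk).trans hs.cutLo,
    hG.cutHi.trans hs.cutHi⟩

lemma par_self (h₁ : Γ₁.Ordered unr) (h₂ : Γ₂.Ordered unr) :
    IsSplit unr .par (.par Γ₁ Γ₂) (Γ₁.interpG unr).n Γ₁ Γ₂ :=
  ⟨.refl _, h₁, h₂, (cutLo_union_left le_rfl).trans (cutLo_n _),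
    (cutHi_union_right le_rfl).trans (by rw [Nat.sub_self]; exact cutHi_zero _)⟩

lemma par_left (hs : IsSplit unr .par Γ₁ k A C) (h₂ : Γ₂.Ordered unr)
    (hk : k ≤ (Γ₁.interpG unr).n) : IsSplit unr .par (.par Γ₁ Γ₂) k A (.par C Γ₂) :=
  ⟨.trans _ _ _ (CtxEquiv.par_congr_s11 hs.equiv (.refl _)) (.symm _ _ (.parAssoc _ _ _)),
    hs.ordered_left, ordered_par.mpr ⟨hs.ordered_right, h₂⟩,
    (cutLo_union_left hk).trans hs.cutLo, (cutHi_union_left hk).trans (hs.cutHi.union (.refl _))⟩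

lemma par_right (hs : IsSplit unr .par Γ₂ (k - (Γ₁.interpG unr).n) A C) (h₁ : Γ₁.Ordered unr)
    (hk₁ : (Γ₁.interpG unr).n ≤ k) (hk₂ : k ≤ ((Γ₁.par Γ₂).interpG unr).n) :
    IsSplit unr .par (.par Γ₁ Γ₂) k (.par Γ₁ A) C :=
  ⟨.trans _ _ _ (CtxEquiv.par_congr_s11 (.refl _) hs.equiv) (.parAssoc _ _ _),
    ordered_par.mpr ⟨h₁, hs.ordered_left⟩, hs.ordered_right,
    (cutLo_union_right hk₁ hk₂).trans ((ExtEq.refl _).union hs.cutLo),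
    (cutHi_union_right hk₁).trans hs.cutHi⟩

lemma comma_self (h₁ : Γ₁.Ordered unr) (h₂ : Γ₂.Ordered unr) :
    IsSplit unr .comma (.comma Γ₁ Γ₂) (Γ₁.interpG unr).n Γ₁ Γ₂ :=
  ⟨.refl _, h₁, h₂, (cutLo_join_left le_rfl).trans (cutLo_n _),
    (cutHi_join_right le_rfl).trans (by rw [Nat.sub_self]; exact cutHi_zero _)⟩

lemma comma_left (hs : IsSplit unr .comma Γ₁ k A C) (h₂ : Γ₂.Ordered unr)
    (hk : k ≤ (Γ₁.interpG unr).n) : IsSplit unr .comma (.comma Γ₁ Γ₂) k A (.comma C Γ₂) :=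
  ⟨.trans _ _ _ (CtxEquiv.comma_congr_s11 hs.equiv (.refl _)) (.symm _ _ (.commaAssoc _ _ _)),
    hs.ordered_left, ordered_comma.mpr ⟨hs.ordered_right, h₂⟩,
    (cutLo_join_left hk).trans hs.cutLo, (cutHi_join_left hk).trans (hs.cutHi.join (.refl _))⟩

lemma comma_right (hs : IsSplit unr .comma Γ₂ (k - (Γ₁.interpG unr).n) A C)
    (h₁ : Γ₁.Ordered unr) (hk₁ : (Γ₁.interpG unr).n ≤ k)
    (hk₂ : k ≤ ((Γ₁.comma Γ₂).interpG unr).n) :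
    IsSplit unr .comma (.comma Γ₁ Γ₂) k (.comma Γ₁ A) C :=
  ⟨.trans _ _ _ (CtxEquiv.comma_congr_s11 (.refl _) hs.equiv) (.commaAssoc _ _ _),
    ordered_comma.mpr ⟨h₁, hs.ordered_left⟩, hs.ordered_right,
    (cutLo_join_right hk₁ hk₂).trans ((ExtEq.refl _).join hs.cutLo),
    (cutHi_join_right hk₁).trans hs.cutHi⟩

end IsSplit

lemma exists_isSplit_par (hΓ : Γ.Ordered unr) (hk : (Γ.interpG unr).UnionCut k) :
    ∃ Γ₁ Γ₂, IsSplit unr .par Γ k Γ₁ Γ₂ := by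
  induction Γ generalizing k with
  | empty | bind b => exact absurd hk.two_le (by simp [n_interpG hΓ, toList])
  | comma Γ₁ Γ₂ ih₁ ih₂ =>
    obtain ⟨h₁, h₂⟩ := ordered_comma.mp hΓ
    rcases hk.n_eq_zero_of_join with z | z
    · have hG := join_of_n_eq_zero_left (H := Γ₂.interpG unr) z
      obtain ⟨A, C, hs⟩ := ih₂ h₂ (hG.unionCut_iff.mp hk)
      exact ⟨A, C, hs.of_equiv
        (.comma_of_toList_eq_nil_left (toList_eq_nil_of_n_interpG_eq_zero h₁ z)) hG hk.2.1.le⟩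
    · have hG := join_of_n_eq_zero_right (G := Γ₁.interpG unr) z
      obtain ⟨A, C, hs⟩ := ih₁ h₁ (hG.unionCut_iff.mp hk)
      exact ⟨A, C, hs.of_equiv
        (.comma_of_toList_eq_nil_right (toList_eq_nil_of_n_interpG_eq_zero h₂ z)) hG hk.2.1.le⟩
  | par Γ₁ Γ₂ ih₁ ih₂ =>
    obtain ⟨h₁, h₂⟩ := ordered_par.mp hΓ
    rcases lt_trichotomy k (Γ₁.interpG unr).n with hlt | rfl | hgt
    · obtain ⟨A, C, hs⟩ := ih₁ h₁ (hk.of_union_left hlt)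
      exact ⟨A, _, hs.par_left h₂ hlt.le⟩
    · exact ⟨Γ₁, Γ₂, .par_self h₁ h₂⟩
    · obtain ⟨A, C, hs⟩ := ih₂ h₂ (hk.of_union_right hgt)
      exact ⟨_, C, hs.par_right h₁ hgt.le hk.2.1.le⟩

lemma exists_isSplit_comma (hΓ : Γ.Ordered unr) (hk : (Γ.interpG unr).JoinCut k) :
    ∃ Γ₁ Γ₂, IsSplit unr .comma Γ k Γ₁ Γ₂ := by
  induction Γ generalizing k with
  | empty | bind b => exact absurd hk.two_le (by simp [n_interpG hΓ, toList])
  | comma Γ₁ Γ₂ ih₁ ih₂ =>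
    obtain ⟨h₁, h₂⟩ := ordered_comma.mp hΓ
    rcases lt_trichotomy k (Γ₁.interpG unr).n with hlt | rfl | hgt
    · obtain ⟨A, C, hs⟩ := ih₁ h₁ (hk.of_join_left hlt)
      exact ⟨A, _, hs.comma_left h₂ hlt.le⟩
    · exact ⟨Γ₁, Γ₂, .comma_self h₁ h₂⟩
    · obtain ⟨A, C, hs⟩ := ih₂ h₂ (hk.of_join_right hgt)
      exact ⟨_, C, hs.comma_right h₁ hgt.le hk.2.1.le⟩
  | par Γ₁ Γ₂ ih₁ ih₂ =>
    obtain ⟨h₁, h₂⟩ := ordered_par.mp hΓ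
    rcases hk.n_eq_zero_of_union with z | z
    · have hG := union_of_n_eq_zero_left (H := Γ₂.interpG unr) z
      obtain ⟨A, C, hs⟩ := ih₂ h₂ (hG.joinCut_iff.mp hk)
      exact ⟨A, C, hs.of_equiv
        (.par_of_toList_eq_nil_left (toList_eq_nil_of_n_interpG_eq_zero h₁ z)) hG hk.2.1.le⟩
    · have hG := union_of_n_eq_zero_right (G := Γ₁.interpG unr) z
      obtain ⟨A, C, hs⟩ := ih₁ h₁ (hG.joinCut_iff.mp hk)
      exact ⟨A, C, hs.of_equiv
        (.par_of_toList_eq_nil_right (toList_eq_nil_of_n_interpG_eq_zero h₂ z)) hG hk.2.1.le⟩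

end GCtx

namespace Graph

variable {B : Type} {unr : B → Bool} {G : Graph B} {Γ Γ' Γ₁ Γ₂ : GCtx B}

lemma realize_of_n_eq_zero (h : G.n = 0) : G.realize = some .empty := by
  rw [realize, if_pos h]

lemma realize_of_n_eq_one (h : G.n = 1) : G.realize = some (.bind (G.label 0)) := by
  rw [realize, if_neg (by omega), if_pos h]

def Realizes (unr : B → Bool) (G : Graph B) (Γ : GCtx B) : Prop :=
  ∃ Δ, G.realize = some Δ ∧ CtxEquiv unr Δ Γ

lemma Realizes.of_equiv (h : G.Realizes unr Γ) (hΓ : CtxEquiv unr Γ Γ') : G.Realizes unr Γ' :=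
  h.imp fun _ ⟨hr, he⟩ => ⟨hr, .trans _ _ _ he hΓ⟩

lemma Realizes.par (hn : 2 ≤ G.n) (hu : ∃ k, G.UnionCut k)
    (h₁ : (G.cutLo (sInf {k | G.UnionCut k})).Realizes unr Γ₁)
    (h₂ : (G.cutHi (sInf {k | G.UnionCut k})).Realizes unr Γ₂) :
    G.Realizes unr (.par Γ₁ Γ₂) := by
  obtain ⟨Δ₁, hr₁, he₁⟩ := h₁
  obtain ⟨Δ₂, hr₂, he₂⟩ := h₂
  refine ⟨.par Δ₁ Δ₂, ?_, CtxEquiv.par_congr_s11 he₁ he₂⟩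
  rw [realize, if_neg (by omega), if_neg (by omega), dif_pos hu, hr₁, hr₂]
  rfl

lemma Realizes.comma (hn : 2 ≤ G.n) (hu : ¬ ∃ k, G.UnionCut k) (hj : ∃ k, G.JoinCut k)
    (h₁ : (G.cutLo (sInf {k | G.JoinCut k})).Realizes unr Γ₁)
    (h₂ : (G.cutHi (sInf {k | G.JoinCut k})).Realizes unr Γ₂) :
    G.Realizes unr (.comma Γ₁ Γ₂) := by
  obtain ⟨Δ₁, hr₁, he₁⟩ := h₁
  obtain ⟨Δ₂, hr₂, he₂⟩ := h₂
  refine ⟨.comma Δ₁ Δ₂, ?_, CtxEquiv.comma_congr_s11 he₁ he₂⟩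
  rw [realize, if_neg (by omega), if_neg (by omega), dif_neg hu, dif_pos hj, hr₁, hr₂]
  rfl

open GCtx in
theorem realizes_of_extEq [Inhabited B] (hΓ : Γ.Ordered unr) (hG : ExtEq G (Γ.interpG unr)) :
    G.Realizes unr Γ := by
  induction hn : G.n using Nat.strong_induction_on generalizing G Γ with
  | _ n ih =>
  have hlen : Γ.toList.length = n := by rw [← n_interpG hΓ, ← hG.n_eq, hn]
  rcases n with _ | _ | m
  · exact ⟨.empty, realize_of_n_eq_zero hn,
      .symm _ _ (.empty_of_toList_eq_nil (List.length_eq_zero_iff.mp hlen))⟩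
  · obtain ⟨b, hb⟩ := List.length_eq_one_iff.mp hlen
    have hlabel : G.label 0 = b := by
      rw [hG.label_eq 0 (by omega), label_interpG hΓ (by rw [← hG.n_eq]; omega), hb]; rfl
    exact ⟨_, realize_of_n_eq_one hn, hlabel ▸ .symm _ _ (.bind_of_toList_eq_singleton hb)⟩
  by_cases hu : ∃ k, G.UnionCut k
  · set k := sInf {k | G.UnionCut k}
    have hk : G.UnionCut k := Nat.sInf_mem hu
    obtain ⟨Γ₁, Γ₂, hs⟩ := exists_isSplit_par hΓ (hG.unionCut_iff.mp hk)
    have hlo := ih k (hn ▸ hk.2.1) hs.ordered_left ((hG.cutLo hk.2.1.le).trans hs.cutLo) rfl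
    have hhi := ih _ (by have := hk.1; rw [n_cutHi]; omega) hs.ordered_right
      (hG.cutHi.trans hs.cutHi) rfl
    exact (Realizes.par (by omega) hu hlo hhi).of_equiv (.symm _ _ hs.equiv)
  by_cases hj : ∃ k, G.JoinCut k
  · set k := sInf {k | G.JoinCut k}
    have hk : G.JoinCut k := Nat.sInf_mem hj
    obtain ⟨Γ₁, Γ₂, hs⟩ := exists_isSplit_comma hΓ (hG.joinCut_iff.mp hk)
    have hlo := ih k (hn ▸ hk.2.1) hs.ordered_left ((hG.cutLo hk.2.1.le).trans hs.cutLo) rfl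
    have hhi := ih _ (by have := hk.1; rw [n_cutHi]; omega) hs.ordered_right
      (hG.cutHi.trans hs.cutHi) rfl
    exact (Realizes.comma (by omega) hu hj hlo hhi).of_equiv (.symm _ _ hs.equiv)
  exact absurd (hG.hasCut_iff.mpr (hasCut_interpG hΓ (by rw [← hG.n_eq]; omega)))
    (by simp [HasCut, hu, hj])

end Graph

/-- **Correctness of realization.** For every context `Γ` containing no
unrestricted bindings, the realization of its graph interpretation is
defined and syntactically equivalent to `Γ`. -/
theorem realize_correct {B : Type} [Inhabited B] (unr : B → Bool) (Γ : GCtx B)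
    (hord : ∀ b ∈ GCtx.toList Γ, unr b = false) :
    ∃ Δ : GCtx B, Graph.realize (GCtx.interpG unr Γ) = some Δ ∧
      CtxEquiv unr Δ Γ :=
  Graph.realizes_of_extEq hord (.refl _)

end LawOrder
end
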